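/- arXiv:1507.05594 — 5 statements merged into one kernel-verified Lean document; each statement's English description precedes it below -/
import Mathlib

section
/- Let F : ℝ → ℝ be a C^∞ function with F(t) ≤ 0 for all t, a local maximum F(0) = 0 at t = 0, and with all derivatives bounded on [-1,1]. Suppose 0 < ρ, and t₀ ∈ [-1,1] satisfies |t₀| ≥ κ^ρ where κ = |F'(t₀)| ≤ 1 is the maximum of |F'| on the closed interval I joining 0 and t₀. Then there is a constant C_ρ > 0, depending only on ρ and the C^∞ bounds of F, such that min over I of F is at most −C_ρ · κ^{1+ρ}. -/
open Set Finset Matrix Nat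

/-- Iterated derivative within a unique-diff set equals the global one for smooth functions. -/
private lemma itdw {f : ℝ → ℝ} (hf : ContDiff ℝ (⊤ : ℕ∞) f) {s : Set ℝ}
    (hs : UniqueDiffOn ℝ s) {x : ℝ} (hx : x ∈ s) (n : ℕ) :
    iteratedDerivWithin n f s x = iteratedDeriv n f x := by
  have H := (hf.contDiffOn (s := Set.univ)).ftaylorSeriesWithin uniqueDiffOn_univ
  have Hs := H.mono (Set.subset_univ s)
  have e1 := Hs.eq_iteratedFDerivWithin_of_uniqueDiffOn (m := n) (by exact_mod_cast le_top) hs hx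
  have e2 := H.eq_iteratedFDerivWithin_of_uniqueDiffOn (m := n) (by exact_mod_cast le_top) uniqueDiffOn_univ
    (Set.mem_univ x)
  rw [iteratedDerivWithin_eq_iteratedFDerivWithin, iteratedDeriv_eq_iteratedFDeriv,
    ← iteratedFDerivWithin_univ, ← e1, ← e2]

/-- Existence of one-sided finite difference stencil coefficients (via Vandermonde). -/
private lemma stencil (m : ℕ) :
    ∃ c : Fin (m + 1) → ℝ, ∀ q : Fin (m + 1),
      ∑ i, c i * (i : ℝ) ^ (q : ℕ) = if (q : ℕ) = 1 then 1 else 0 := by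
  classical
  set v : Fin (m + 1) → ℝ := fun i => (i : ℝ) with hv
  set A : Matrix (Fin (m + 1)) (Fin (m + 1)) ℝ := (Matrix.vandermonde v)ᵀ with hA
  have hdet : A.det ≠ 0 := by
    rw [hA, Matrix.det_transpose, Matrix.det_vandermonde]
    refine Finset.prod_ne_zero_iff.mpr fun i _ => ?_
    refine Finset.prod_ne_zero_iff.mpr fun j hj => ?_
    have hij : i < j := Finset.mem_Ioi.mp hj
    have : v i < v j := by
      simp only [hv]
      exact_mod_cast (Fin.lt_iff_val_lt_val.mp hij)
    exact sub_ne_zero.mpr (ne_of_gt this)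
  set b : Fin (m + 1) → ℝ := fun q => if (q : ℕ) = 1 then 1 else 0 with hb
  refine ⟨A⁻¹.mulVec b, fun q => ?_⟩
  have hAinv : A * A⁻¹ = 1 := Matrix.mul_nonsing_inv A (isUnit_iff_ne_zero.mpr hdet)
  have h1 : A.mulVec (A⁻¹.mulVec b) = b := by
    rw [Matrix.mulVec_mulVec, hAinv, Matrix.one_mulVec]
  have h2 := congrFun h1 q
  simp only [Matrix.mulVec, dotProduct, hA, Matrix.transpose_apply,
    Matrix.vandermonde_apply, hb, hv] at h2
  rw [← h2]
  exact Finset.sum_congr rfl fun i _ => mul_comm _ _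

/-- Taylor bound, base point at the left. -/
private lemma taylor_le {f : ℝ → ℝ} (hf : ContDiff ℝ (⊤ : ℕ∞) f) {x₀ x M : ℝ} (hx : x₀ ≤ x) {m : ℕ}
    (hM : ∀ y ∈ Set.Icc x₀ x, |iteratedDeriv (m + 1) f y| ≤ M) :
    |f x - ∑ q ∈ Finset.range (m + 1), iteratedDeriv q f x₀ * (x - x₀) ^ q / q.factorial| ≤
      M * (x - x₀) ^ (m + 1) / m.factorial := by
  rcases eq_or_lt_of_le hx with rfl | hlt
  · have hsum : ∑ q ∈ Finset.range (m + 1), iteratedDeriv q f x₀ * (x₀ - x₀) ^ q / q.factorial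
        = f x₀ := by
      rw [Finset.sum_eq_single 0]
      · simp
      · intro q _ hq
        simp [sub_self, zero_pow hq]
      · intro h
        exact absurd (Finset.mem_range.mpr (Nat.succ_pos m)) h
    rw [hsum, sub_self, abs_zero, sub_self, zero_pow (Nat.succ_ne_zero m)]
    simp
  · have hu : UniqueDiffOn ℝ (Set.Icc x₀ x) := uniqueDiffOn_Icc hlt
    have hC : ∀ y ∈ Set.Icc x₀ x,
        ‖iteratedDerivWithin (m + 1) f (Set.Icc x₀ x) y‖ ≤ M := by
      intro y hy
      rw [Real.norm_eq_abs, itdw hf hu hy]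
      exact hM y hy
    have h0 : x₀ ∈ Set.Icc x₀ x := Set.left_mem_Icc.mpr hlt.le
    have hT := taylor_mean_remainder_bound hlt.le ((hf.of_le (by exact_mod_cast le_top)).contDiffOn)
      (Set.right_mem_Icc.mpr hlt.le) hC
    rw [taylor_within_apply] at hT
    have hsum : ∑ k ∈ Finset.range (m + 1),
        ((k.factorial : ℝ)⁻¹ * (x - x₀) ^ k) • iteratedDerivWithin k f (Set.Icc x₀ x) x₀
        = ∑ q ∈ Finset.range (m + 1), iteratedDeriv q f x₀ * (x - x₀) ^ q / q.factorial := by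
      refine Finset.sum_congr rfl fun k _ => ?_
      rw [itdw hf hu h0, smul_eq_mul]
      ring
    rw [Real.norm_eq_abs, hsum] at hT
    exact hT

/-- Two-sided Taylor bound. -/
private lemma taylor_two {f : ℝ → ℝ} (hf : ContDiff ℝ (⊤ : ℕ∞) f) {x₀ x M : ℝ} {m : ℕ}
    (hM : ∀ y ∈ Set.uIcc x₀ x, |iteratedDeriv (m + 1) f y| ≤ M) :
    |f x - ∑ q ∈ Finset.range (m + 1), iteratedDeriv q f x₀ * (x - x₀) ^ q / q.factorial| ≤
      M * |x - x₀| ^ (m + 1) / m.factorial := by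
  rcases le_total x₀ x with h | h
  · have := taylor_le hf h (fun y hy => hM y (by rwa [Set.uIcc_of_le h]))
    rwa [abs_of_nonneg (sub_nonneg.mpr h)]
  · set g : ℝ → ℝ := fun y => f (-y) with hg
    have hgc : ContDiff ℝ (⊤ : ℕ∞) g := hf.comp contDiff_id.neg
    have hgM : ∀ y ∈ Set.Icc (-x₀) (-x), |iteratedDeriv (m + 1) g y| ≤ M := by
      intro y hy
      have hmem : -y ∈ Set.uIcc x₀ x := by
        rw [Set.uIcc_of_ge h]
        exact ⟨by linarith [hy.2], by linarith [hy.1]⟩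
      calc |iteratedDeriv (m + 1) g y|
          = |(-1 : ℝ) ^ (m + 1) • iteratedDeriv (m + 1) f (-y)| := by
            rw [iteratedDeriv_comp_neg]
        _ = |iteratedDeriv (m + 1) f (-y)| := by
            rw [smul_eq_mul, abs_mul, abs_pow, abs_neg, abs_one, one_pow, one_mul]
        _ ≤ M := hM _ hmem
    have h2 := taylor_le hgc (neg_le_neg h) hgM
    have hgx : g (-x) = f x := by simp [hg]
    have hsum : ∑ q ∈ Finset.range (m + 1), iteratedDeriv q g (-x₀) * (-x - -x₀) ^ q / q.factorial
        = ∑ q ∈ Finset.range (m + 1), iteratedDeriv q f x₀ * (x - x₀) ^ q / q.factorial := by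
      refine Finset.sum_congr rfl fun q _ => ?_
      have e1 : ((-1 : ℝ)) ^ q * (-x - -x₀) ^ q = (x - x₀) ^ q := by
        rw [← mul_pow]; congr 1; ring
      rw [iteratedDeriv_comp_neg, neg_neg, smul_eq_mul]
      linear_combination (iteratedDeriv q f x₀ / (q.factorial : ℝ)) * e1
    rw [hgx, hsum] at h2
    have e2 : (-x - -x₀ : ℝ) = |x - x₀| := by
      rw [abs_sub_comm, abs_of_nonneg (sub_nonneg.mpr h)]
      ring
    rwa [e2] at h2

set_option maxHeartbeats 1000000 in
/-- Lemma 7.1, "intlem": If `F ≤ 0` is smooth with maximum `F 0 = 0`,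
all derivatives bounded on `[-1,1]` by `B`, and `κ = |F'(t₀)| ≤ 1` is the maximum
of `|F'|` on the interval `I` joining `0` and `t₀`, with `|t₀| ≥ κ^ρ`, then
`min_I F ≤ -C_ρ κ^{1+ρ}` with `C_ρ > 0` depending only on `ρ` and the bounds `B`. -/
theorem stmt_0 (ρ : ℝ) (hρ : 0 < ρ) (B : ℕ → ℝ) :
    ∃ C : ℝ, 0 < C ∧
      ∀ (F : ℝ → ℝ), ContDiff ℝ (⊤ : ℕ∞) F →
        (∀ t, F t ≤ 0) → F 0 = 0 →
        (∀ n : ℕ, ∀ t ∈ Set.Icc (-1 : ℝ) 1, |iteratedDeriv n F t| ≤ B n) →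
        ∀ t₀ ∈ Set.Icc (-1 : ℝ) 1, ∀ κ : ℝ,
          κ = |deriv F t₀| → κ ≤ 1 →
          (∀ t ∈ Set.uIcc (0 : ℝ) t₀, |deriv F t| ≤ κ) →
          κ ^ ρ ≤ |t₀| →
          ∃ t ∈ Set.uIcc (0 : ℝ) t₀, F t ≤ -C * κ ^ (1 + ρ) := by
  classical
  obtain ⟨m, hm1, hmρ⟩ : ∃ m : ℕ, 1 ≤ m ∧ 1 ≤ (m : ℝ) * ρ := by
    refine ⟨max 1 ⌈1 / ρ⌉₊, le_max_left _ _, ?_⟩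
    have h1 : (1 : ℝ) / ρ ≤ (⌈1 / ρ⌉₊ : ℝ) := Nat.le_ceil _
    have h2 : ((⌈1 / ρ⌉₊ : ℕ) : ℝ) ≤ ((max 1 ⌈1 / ρ⌉₊ : ℕ) : ℝ) := by
      exact_mod_cast le_max_right 1 ⌈1 / ρ⌉₊
    have h3 : (1 : ℝ) / ρ ≤ ((max 1 ⌈1 / ρ⌉₊ : ℕ) : ℝ) := le_trans h1 h2
    rw [div_le_iff₀ hρ] at h3
    linarith
  obtain ⟨c, hc⟩ := stencil m
  set K : ℝ := (∑ i, |c i|) + 1 with hK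
  have hKsum : 0 ≤ ∑ i, |c i| := Finset.sum_nonneg fun i _ => abs_nonneg _
  have hK1 : 1 ≤ K := by rw [hK]; linarith
  have hKpos : 0 < K := lt_of_lt_of_le one_pos hK1
  set Bp : ℝ := |B (m + 1)| + 1 with hBp
  have hBppos : 0 < Bp := by positivity
  have hfacpos : 0 < (m.factorial : ℝ) := by exact_mod_cast Nat.factorial_pos m
  set E : ℝ := K * Bp / m.factorial with hE
  have hEpos : 0 < E := by positivity
  have hmpos : (0 : ℝ) < m := by exact_mod_cast hm1
  set δ : ℝ := min 1 (1 / (2 * m * E)) with hδ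
  have hδpos : 0 < δ := lt_min one_pos (by positivity)
  have hδ1 : δ ≤ 1 := min_le_left _ _
  set C : ℝ := δ / (2 * m * K) with hC
  have hCpos : 0 < C := by positivity
  refine ⟨C, hCpos, ?_⟩
  intro F hF hFle hF0 hB t₀ ht₀ κ hκdef hκ1 _ hκρ
  have hκ0 : 0 ≤ κ := hκdef ▸ abs_nonneg _
  rcases hκ0.eq_or_lt with hκz | hκpos
  · refine ⟨0, Set.left_mem_uIcc, ?_⟩
    rw [← hκz, Real.zero_rpow (by positivity : (1 : ℝ) + ρ ≠ 0)]
    simp [hF0]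
  -- main case κ > 0
  have hκρpos : 0 < κ ^ ρ := Real.rpow_pos_of_pos hκpos ρ
  have ht₀pos : 0 < |t₀| := lt_of_lt_of_le hκρpos hκρ
  set h : ℝ := δ * κ ^ ρ with hh
  have hhpos : 0 < h := by positivity
  have hht₀ : h ≤ |t₀| := by
    have : h ≤ κ ^ ρ := by nlinarith
    linarith
  set σ : ℝ := if 0 ≤ t₀ then (1 : ℝ) else -1 with hσ
  set s : ℝ := -σ * (h / m) with hs
  have habs_s : |s| = h / m := by
    rw [hs, abs_mul, abs_neg]
    have : |σ| = 1 := by rw [hσ]; split <;> simp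
    rw [this, one_mul, abs_of_nonneg (by positivity : (0:ℝ) ≤ h / m)]
  -- stencil points lie in the interval
  have hri : ∀ i : Fin (m + 1), 0 ≤ (h / m) * i ∧ (h / m) * i ≤ h := by
    intro i
    have hi : (i : ℝ) ≤ m := by exact_mod_cast Fin.is_le i
    constructor
    · positivity
    · calc (h / m) * i ≤ (h / m) * m := by
            apply mul_le_mul_of_nonneg_left hi (by positivity)
        _ = h := by field_simp
  have hp_mem : ∀ i : Fin (m + 1), t₀ + s * i ∈ Set.uIcc 0 t₀ := by
    intro i
    obtain ⟨hr0, hr1⟩ := hri i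
    rw [Set.mem_uIcc]
    rcases le_or_gt 0 t₀ with hpos | hneg
    · have habs : |t₀| = t₀ := abs_of_nonneg hpos
      have hσ1 : σ = 1 := by rw [hσ, if_pos hpos]
      left
      rw [hs, hσ1]
      constructor <;> nlinarith [hr1.trans hht₀]
    · have habs : |t₀| = -t₀ := abs_of_neg hneg
      have hσ1 : σ = -1 := by rw [hσ, if_neg (not_le.mpr hneg)]
      right
      rw [hs, hσ1]
      constructor <;> nlinarith [hr1.trans hht₀]
  have hIsub : Set.uIcc 0 t₀ ⊆ Set.Icc (-1 : ℝ) 1 := by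
    apply Set.ordConnected_Icc.uIcc_subset _ ht₀
    exact ⟨by norm_num, by norm_num⟩
  -- Taylor estimates at stencil points
  have hTay : ∀ i : Fin (m + 1),
      |F (t₀ + s * i) - ∑ q ∈ Finset.range (m + 1),
          iteratedDeriv q F t₀ * (s * i) ^ q / q.factorial| ≤ Bp * h ^ (m + 1) / m.factorial := by
    intro i
    have hM : ∀ y ∈ Set.uIcc t₀ (t₀ + s * i), |iteratedDeriv (m + 1) F y| ≤ Bp := by
      intro y hy
      have hsubset : Set.uIcc t₀ (t₀ + s * i) ⊆ Set.Icc (-1 : ℝ) 1 :=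
        Set.ordConnected_Icc.uIcc_subset ht₀ (hIsub (hp_mem i))
      have := hB (m + 1) y (hsubset hy)
      calc |iteratedDeriv (m + 1) F y| ≤ B (m + 1) := this
        _ ≤ |B (m + 1)| := le_abs_self _
        _ ≤ Bp := by rw [hBp]; linarith
    have hT := taylor_two hF hM
    have e1 : (t₀ + s * i - t₀ : ℝ) = s * i := by ring
    rw [e1] at hT
    refine hT.trans ?_
    have hsi : |s * (i : ℝ)| ≤ h := by
      rw [abs_mul, habs_s, abs_of_nonneg (by positivity : (0:ℝ) ≤ ((i : ℕ) : ℝ))]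
      exact (hri i).2
    have : |s * (i : ℝ)| ^ (m + 1) ≤ h ^ (m + 1) :=
      pow_le_pow_left₀ (abs_nonneg _) hsi (m + 1)
    gcongr
  -- the key algebraic identity
  have hkey : ∑ i : Fin (m + 1), c i * (∑ q ∈ Finset.range (m + 1),
      iteratedDeriv q F t₀ * (s * i) ^ q / q.factorial) = deriv F t₀ * s := by
    have e1 : ∀ i : Fin (m + 1), c i * (∑ q ∈ Finset.range (m + 1),
        iteratedDeriv q F t₀ * (s * (i : ℝ)) ^ q / q.factorial)
        = ∑ q ∈ Finset.range (m + 1),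
            (iteratedDeriv q F t₀ * s ^ q / q.factorial) * (c i * (i : ℝ) ^ q) := by
      intro i
      rw [Finset.mul_sum]
      refine Finset.sum_congr rfl fun q _ => ?_
      rw [mul_pow]
      ring
    rw [Finset.sum_congr rfl fun i _ => e1 i, Finset.sum_comm]
    have e2 : ∀ q ∈ Finset.range (m + 1), (∑ i : Fin (m + 1),
        (iteratedDeriv q F t₀ * s ^ q / q.factorial) * (c i * (i : ℝ) ^ q))
        = (iteratedDeriv q F t₀ * s ^ q / q.factorial) * (if q = 1 then 1 else 0) := by
      intro q hq
      rw [← Finset.mul_sum]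
      congr 1
      exact hc ⟨q, Finset.mem_range.mp hq⟩
    rw [Finset.sum_congr rfl e2]
    simp only [mul_ite, mul_one, mul_zero]
    rw [Finset.sum_ite_eq' (Finset.range (m + 1)) 1
      (fun q => iteratedDeriv q F t₀ * s ^ q / q.factorial)]
    rw [if_pos (Finset.mem_range.mpr (by omega))]
    rw [iteratedDeriv_one]
    simp [Nat.factorial_one]
  -- pick the worst stencil point
  obtain ⟨j, -, hj⟩ := Finset.exists_max_image Finset.univ
    (fun i : Fin (m + 1) => |F (t₀ + s * i)|) ⟨0, Finset.mem_univ 0⟩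
  -- main estimate
  have hmain : κ * (h / m) ≤ K * |F (t₀ + s * j)| + K * (Bp * h ^ (m + 1) / m.factorial) := by
    have e1 : κ * (h / m) = |deriv F t₀ * s| := by
      rw [abs_mul, ← hκdef, habs_s]
    rw [e1, ← hkey]
    calc |∑ i : Fin (m + 1), c i * (∑ q ∈ Finset.range (m + 1),
            iteratedDeriv q F t₀ * (s * i) ^ q / q.factorial)|
        ≤ ∑ i : Fin (m + 1), |c i * (∑ q ∈ Finset.range (m + 1),
            iteratedDeriv q F t₀ * (s * i) ^ q / q.factorial)| := Finset.abs_sum_le_sum_abs _ _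
      _ ≤ ∑ i : Fin (m + 1), |c i| * (|F (t₀ + s * j)| + Bp * h ^ (m + 1) / m.factorial) := by
          refine Finset.sum_le_sum fun i _ => ?_
          rw [abs_mul]
          apply mul_le_mul_of_nonneg_left _ (abs_nonneg _)
          have tri : |∑ q ∈ Finset.range (m + 1), iteratedDeriv q F t₀ * (s * i) ^ q / q.factorial|
              ≤ |F (t₀ + s * i)| + Bp * h ^ (m + 1) / m.factorial := by
            have := hTay i
            have habc := abs_sub_abs_le_abs_sub
              (∑ q ∈ Finset.range (m + 1), iteratedDeriv q F t₀ * (s * i) ^ q / q.factorial)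
              (F (t₀ + s * i))
            rw [abs_sub_comm] at habc
            linarith
          exact tri.trans (by linarith [hj i (Finset.mem_univ i)])
      _ = (∑ i, |c i|) * (|F (t₀ + s * j)| + Bp * h ^ (m + 1) / m.factorial) := by
          rw [← Finset.sum_mul]
      _ ≤ K * (|F (t₀ + s * j)| + Bp * h ^ (m + 1) / m.factorial) := by
          apply mul_le_mul_of_nonneg_right (by rw [hK]; linarith)
          positivity
      _ = K * |F (t₀ + s * j)| + K * (Bp * h ^ (m + 1) / m.factorial) := by ring
  -- bound the error term
  have hκ1ρpos : 0 < κ ^ (1 + ρ) := Real.rpow_pos_of_pos hκpos _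
  have herr : K * (Bp * h ^ (m + 1) / m.factorial) ≤ δ * κ ^ (1 + ρ) / (2 * m) := by
    have hpow : h ^ (m + 1) = δ ^ (m + 1) * (κ ^ ρ) ^ (m + 1) := mul_pow _ _ _
    have hrp : (κ ^ ρ) ^ (m + 1) = κ ^ (ρ * (m + 1 : ℕ)) := by
      rw [Real.rpow_mul hκ0, Real.rpow_natCast]
    have hexp : κ ^ (ρ * ((m : ℕ) + 1 : ℕ)) ≤ κ ^ (1 + ρ) := by
      apply Real.rpow_le_rpow_of_exponent_ge hκpos hκ1
      push_cast
      nlinarith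
    have hδm : δ ^ (m + 1) ≤ δ * (1 / (2 * m * E)) := by
      have h1 : δ ^ (m + 1) = δ * δ ^ m := by ring
      have h2 : δ ^ m ≤ δ ^ 1 := pow_le_pow_of_le_one hδpos.le hδ1 hm1
      have h3 : δ ≤ 1 / (2 * m * E) := min_le_right _ _
      rw [h1]
      have : δ ^ m ≤ 1 / (2 * m * E) := by
        rw [pow_one] at h2; exact h2.trans h3
      nlinarith
    have hκρn : 0 ≤ (κ ^ ρ) ^ (m + 1) := by positivity
    calc K * (Bp * h ^ (m + 1) / m.factorial) = E * h ^ (m + 1) := by rw [hE]; ring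
      _ = E * (δ ^ (m + 1) * (κ ^ ρ) ^ (m + 1)) := by rw [hpow]
      _ ≤ E * ((δ * (1 / (2 * m * E))) * (κ ^ ρ) ^ (m + 1)) := by
          apply mul_le_mul_of_nonneg_left _ hEpos.le
          exact mul_le_mul_of_nonneg_right hδm hκρn
      _ = (δ / (2 * m)) * (κ ^ ρ) ^ (m + 1) := by field_simp
      _ = (δ / (2 * m)) * κ ^ (ρ * (m + 1 : ℕ)) := by rw [hrp]
      _ ≤ (δ / (2 * m)) * κ ^ (1 + ρ) := by
          apply mul_le_mul_of_nonneg_left _ (by positivity)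
          exact_mod_cast hexp
      _ = δ * κ ^ (1 + ρ) / (2 * m) := by ring
  have hlhs : κ * (h / m) = δ * κ ^ (1 + ρ) / m := by
    rw [hh, Real.rpow_add hκpos, Real.rpow_one]
    ring
  -- conclude
  have hworst : C * κ ^ (1 + ρ) ≤ |F (t₀ + s * j)| := by
    have h1 : K * |F (t₀ + s * j)| ≥ δ * κ ^ (1 + ρ) / (2 * m) := by
      rw [hlhs] at hmain
      have : δ * κ ^ (1 + ρ) / m - δ * κ ^ (1 + ρ) / (2 * m) = δ * κ ^ (1 + ρ) / (2 * m) := by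
        field_simp
        ring
      linarith
    rw [hC, div_mul_eq_mul_div, div_le_iff₀ (by positivity : (0:ℝ) < 2 * m * K)]
    have h3 := mul_le_mul_of_nonneg_left (ge_iff_le.mp h1)
      (le_of_lt (by positivity : (0:ℝ) < 2 * (m:ℝ)))
    have h5 : δ * κ ^ (1 + ρ) ≤ 2 * (m:ℝ) * (K * |F (t₀ + s * j)|) := by
      calc δ * κ ^ (1 + ρ) = 2 * (m:ℝ) * (δ * κ ^ (1 + ρ) / (2 * m)) := by
            field_simp
        _ ≤ 2 * (m:ℝ) * (K * |F (t₀ + s * j)|) := h3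
    linarith [h5]
  refine ⟨t₀ + s * j, hp_mem j, ?_⟩
  have hFj : F (t₀ + s * j) ≤ 0 := hFle _
  rw [abs_of_nonpos hFj] at hworst
  linarith
end

section
/- Let w : ℝ → ℝ^{2n} be the solution of the ODE w'(t) = A(t) · φ₁(t) with w(0) = w₀, where A is smooth matrix-valued and φ₁(t) = (∂_w f)(t, w(t)) for a smooth function f : ℝ × ℝ^{2n} → ℝ. If t ↦ (∂_w f)(t, w₀) vanishes to order r ≥ 1 at t = 0 (i.e. its derivatives of order < r vanish at 0), then w'(t) vanishes to order r at t = 0, and t ↦ w(t) − w₀ vanishes to order r + 1 at t = 0. -/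
open Function Set

section aux
variable {E F G : Type*} [NormedAddCommGroup E] [NormedSpace ℝ E]
  [NormedAddCommGroup F] [NormedSpace ℝ F] [NormedAddCommGroup G] [NormedSpace ℝ G]

lemma my_taylorComp_congr {j : ℕ} (q : FormalMultilinearSeries ℝ F G)
    (p p' : FormalMultilinearSeries ℝ E F)
    (hp : ∀ m ≤ j, p m = p' m) : q.taylorComp p j = q.taylorComp p' j := by
  unfold FormalMultilinearSeries.taylorComp
  refine Finset.sum_congr rfl fun c _ => ?_
  unfold FormalMultilinearSeries.compAlongOrderedFinpartition
  congr 1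
  funext m
  exact hp _ (c.partSize_le m)

lemma my_iteratedFDeriv_eq_zero_iff {g : ℝ → F} {k : ℕ} {x : ℝ} :
    iteratedFDeriv ℝ k g x = 0 ↔ iteratedDeriv k g x = 0 := by
  constructor
  · intro h
    rw [iteratedDeriv_eq_iteratedFDeriv, h]
    rfl
  · intro h
    ext m
    rw [iteratedFDeriv_apply_eq_iteratedDeriv_mul_prod, h, smul_zero]
    rfl

lemma my_key_comp (H : ℝ × E → F) (hH : ContDiff ℝ (⊤ : ℕ∞) H)
    (u v : ℝ → E) (hu : ContDiff ℝ (⊤ : ℕ∞) u) (hv : ContDiff ℝ (⊤ : ℕ∞) v)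
    (K : ℕ) (heq : ∀ m ≤ K, iteratedFDeriv ℝ m u 0 = iteratedFDeriv ℝ m v 0) :
    ∀ j ≤ K, iteratedFDeriv ℝ j (fun t => H (t, u t)) 0
      = iteratedFDeriv ℝ j (fun t => H (t, v t)) 0 := by
  intro j hj
  have hu0 : u 0 = v 0 := by
    have h0 := congrFun (congrArg DFunLike.coe (heq 0 (Nat.zero_le _))) (fun _ => (1:ℝ))
    simpa [iteratedFDeriv_zero_apply] using h0
  set U : ℝ → ℝ × E := fun t => (t, u t) with hUdef
  set V : ℝ → ℝ × E := fun t => (t, v t) with hVdef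
  have hUc : ContDiff ℝ (⊤ : ℕ∞) U := contDiff_id.prodMk hu
  have hVc : ContDiff ℝ (⊤ : ℕ∞) V := contDiff_id.prodMk hv
  have expand : ∀ (φ : ℝ → E), (fun t : ℝ => ((t : ℝ), φ t)) =
      (fun t : ℝ => (ContinuousLinearMap.inl ℝ ℝ E) t)
        + ((ContinuousLinearMap.inr ℝ ℝ E) ∘ φ) := by
    intro φ; funext t
    simp [Prod.ext_iff]
  have step : ∀ (φ : ℝ → E), ContDiff ℝ (⊤ : ℕ∞) φ → ∀ m : ℕ,
      iteratedFDeriv ℝ m (fun t : ℝ => ((t:ℝ), φ t)) 0 =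
      iteratedFDeriv ℝ m (fun t : ℝ => (ContinuousLinearMap.inl ℝ ℝ E) t) 0 +
      (ContinuousLinearMap.inr ℝ ℝ E).compContinuousMultilinearMap (iteratedFDeriv ℝ m φ 0) := by
    intro φ hφ m
    rw [expand φ, iteratedFDeriv_add_apply ((ContinuousLinearMap.inl ℝ ℝ E).contDiff.of_le le_top).contDiffAt
      (((ContinuousLinearMap.inr ℝ ℝ E).contDiff.comp hφ).of_le (by exact_mod_cast le_top)).contDiffAt,
      (ContinuousLinearMap.inr ℝ ℝ E).iteratedFDeriv_comp_left (hφ.contDiffAt (x := 0)) (by exact_mod_cast le_top)]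
  have hUV : ∀ m ≤ K, iteratedFDeriv ℝ m U 0 = iteratedFDeriv ℝ m V 0 := by
    intro m hm
    rw [hUdef, hVdef, step u hu m, step v hv m, heq m hm]
  have qH : HasFTaylorSeriesUpToOn (j : ℕ∞) H (ftaylorSeriesWithin ℝ H univ) univ :=
    ((hH.of_le (by exact_mod_cast le_top)).contDiffOn (s := univ)).ftaylorSeriesWithin uniqueDiffOn_univ
  have pU : HasFTaylorSeriesUpToOn (j : ℕ∞) U (ftaylorSeriesWithin ℝ U univ) univ :=
    ((hUc.of_le (by exact_mod_cast le_top)).contDiffOn (s := univ)).ftaylorSeriesWithin uniqueDiffOn_univ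
  have pV : HasFTaylorSeriesUpToOn (j : ℕ∞) V (ftaylorSeriesWithin ℝ V univ) univ :=
    ((hVc.of_le (by exact_mod_cast le_top)).contDiffOn (s := univ)).ftaylorSeriesWithin uniqueDiffOn_univ
  have cU := qH.comp pU (mapsTo_univ _ _)
  have cV := qH.comp pV (mapsTo_univ _ _)
  have eU : iteratedFDeriv ℝ j (H ∘ U) 0
      = (ftaylorSeriesWithin ℝ H univ (U 0)).taylorComp (ftaylorSeriesWithin ℝ U univ 0) j := by
    rw [← iteratedFDerivWithin_univ]
    exact (cU.eq_iteratedFDerivWithin_of_uniqueDiffOn (by exact_mod_cast le_rfl)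
      uniqueDiffOn_univ (mem_univ 0)).symm
  have eV : iteratedFDeriv ℝ j (H ∘ V) 0
      = (ftaylorSeriesWithin ℝ H univ (V 0)).taylorComp (ftaylorSeriesWithin ℝ V univ 0) j := by
    rw [← iteratedFDerivWithin_univ]
    exact (cV.eq_iteratedFDerivWithin_of_uniqueDiffOn (by exact_mod_cast le_rfl)
      uniqueDiffOn_univ (mem_univ 0)).symm
  have hval : U 0 = V 0 := by rw [hUdef, hVdef]; simp [hu0]
  have : iteratedFDeriv ℝ j (H ∘ U) 0 = iteratedFDeriv ℝ j (H ∘ V) 0 := by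
    rw [eU, eV, hval]
    apply my_taylorComp_congr
    intro m hm
    show iteratedFDerivWithin ℝ m U univ 0 = iteratedFDerivWithin ℝ m V univ 0
    rw [iteratedFDerivWithin_univ, iteratedFDerivWithin_univ]
    exact hUV m (hm.trans hj)
  exact this


end aux


/-- Lemma 5.1, "vanlem": let `w` solve `w' = A(t) ∂_w f(t, w(t))`,
`w 0 = w₀`, with `A` and `f` smooth. If `t ↦ ∂_w f(t, w₀)` vanishes to order
`r ≥ 1` at `t = 0`, then `w'` vanishes to order `r` and `w - w₀` vanishes to
order `r + 1` at `t = 0`. -/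
theorem stmt_4 {n : ℕ}
    (f : ℝ → EuclideanSpace ℝ (Fin (2 * n)) → ℝ)
    (hf : ContDiff ℝ (⊤ : ℕ∞) (Function.uncurry f))
    (A : ℝ → EuclideanSpace ℝ (Fin (2 * n)) →L[ℝ] EuclideanSpace ℝ (Fin (2 * n)))
    (hA : ContDiff ℝ (⊤ : ℕ∞) A)
    (w : ℝ → EuclideanSpace ℝ (Fin (2 * n))) (w₀ : EuclideanSpace ℝ (Fin (2 * n)))
    (hw : ContDiff ℝ (⊤ : ℕ∞) w) (hw0 : w 0 = w₀)
    (hode : ∀ t, deriv w t = A t (gradient (fun v => f t v) (w t)))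
    (r : ℕ) (hr : 1 ≤ r)
    (hvan : ∀ k < r, iteratedDeriv k (fun t => gradient (fun v => f t v) w₀) 0 = 0) :
    (∀ k < r, iteratedDeriv k (deriv w) 0 = 0) ∧
    (∀ k < r + 1, iteratedDeriv k (fun t => w t - w₀) 0 = 0) := by
  -- joint smoothness of the gradient
  have hder : ∀ (t : ℝ) (x : EuclideanSpace ℝ (Fin (2 * n))), fderiv ℝ (fun v => f t v) x
      = (fderiv ℝ (uncurry f) (t, x)).comp
          (ContinuousLinearMap.inr ℝ ℝ (EuclideanSpace ℝ (Fin (2 * n)))) := by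
    intro t x
    have h1 : HasFDerivAt (uncurry f) (fderiv ℝ (uncurry f) (t, x)) (t, x) :=
      ((hf.differentiable (by simp)) (t, x)).hasFDerivAt
    exact (h1.comp x (hasFDerivAt_prodMk_right t x)).fderiv
  have hgrad_eq : ∀ (t : ℝ) (x : EuclideanSpace ℝ (Fin (2 * n))), gradient (fun v => f t v) x
      = (InnerProductSpace.toDual ℝ (EuclideanSpace ℝ (Fin (2 * n)))).symm
          ((fderiv ℝ (uncurry f) (t, x)).comp
            (ContinuousLinearMap.inr ℝ ℝ (EuclideanSpace ℝ (Fin (2 * n))))) := by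
    intro t x
    rw [gradient, hder t x]
  have hgrad_smooth : ContDiff ℝ (⊤ : ℕ∞) (fun p : ℝ × EuclideanSpace ℝ (Fin (2 * n)) =>
      gradient (fun v => f p.1 v) p.2) := by
    have h2 : ContDiff ℝ (⊤ : ℕ∞) (fun p : ℝ × EuclideanSpace ℝ (Fin (2 * n)) =>
        (InnerProductSpace.toDual ℝ (EuclideanSpace ℝ (Fin (2 * n)))).symm
          ((fderiv ℝ (uncurry f) p).comp
            (ContinuousLinearMap.inr ℝ ℝ (EuclideanSpace ℝ (Fin (2 * n)))))) := by
      apply (InnerProductSpace.toDual ℝ (EuclideanSpace ℝ (Fin (2 * n)))).symm.contDiff.comp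
      exact ((ContinuousLinearMap.compL ℝ (EuclideanSpace ℝ (Fin (2 * n)))
        (ℝ × EuclideanSpace ℝ (Fin (2 * n))) ℝ).flip
        (ContinuousLinearMap.inr ℝ ℝ (EuclideanSpace ℝ (Fin (2 * n))))).contDiff.comp
        (hf.fderiv_right (by simp))
    have hfun : (fun p : ℝ × EuclideanSpace ℝ (Fin (2 * n)) =>
        gradient (fun v => f p.1 v) p.2) = fun p =>
        (InnerProductSpace.toDual ℝ (EuclideanSpace ℝ (Fin (2 * n)))).symm
          ((fderiv ℝ (uncurry f) p).comp
            (ContinuousLinearMap.inr ℝ ℝ (EuclideanSpace ℝ (Fin (2 * n))))) :=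
      funext fun p => hgrad_eq p.1 p.2
    rw [hfun]
    exact h2
  -- the smooth right-hand side of the ODE
  have hh : ContDiff ℝ (⊤ : ℕ∞) (fun p : ℝ × EuclideanSpace ℝ (Fin (2 * n)) =>
      A p.1 (gradient (fun v => f p.1 v) p.2)) :=
    (hA.comp contDiff_fst).clm_apply hgrad_smooth
  have hwode : deriv w = fun t => A t (gradient (fun v => f t v) (w t)) := funext fun t => hode t
  have hg0 : ContDiff ℝ (⊤ : ℕ∞) (fun t : ℝ => gradient (fun v => f t v) w₀) :=
    hgrad_smooth.comp (contDiff_id.prodMk contDiff_const)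
  -- Step A: vanishing of t ↦ A t (gradient f(t, ·) w₀)
  have SA : ∀ k < r, iteratedFDeriv ℝ k (fun t => A t (gradient (fun v => f t v) w₀)) 0 = 0 := by
    intro k hk
    have heq : ∀ m ≤ r - 1, iteratedFDeriv ℝ m (fun t : ℝ => gradient (fun v => f t v) w₀) 0
        = iteratedFDeriv ℝ m (fun _ : ℝ => (0 : EuclideanSpace ℝ (Fin (2 * n)))) 0 := by
      intro m hm
      simp only [iteratedFDeriv_zero_fun, Pi.zero_apply]
      exact my_iteratedFDeriv_eq_zero_iff.mpr
        (hvan m (lt_of_le_of_lt hm (Nat.pred_lt (Nat.one_le_iff_ne_zero.mp hr))))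
    have key := my_key_comp (fun p : ℝ × EuclideanSpace ℝ (Fin (2 * n)) => A p.1 p.2)
      ((hA.comp contDiff_fst).clm_apply contDiff_snd)
      (fun t : ℝ => gradient (fun v => f t v) w₀)
      (fun _ => (0 : EuclideanSpace ℝ (Fin (2 * n))))
      hg0 contDiff_const (r - 1) heq k (Nat.le_pred_of_lt hk)
    have hz : (fun t : ℝ => A t (0 : EuclideanSpace ℝ (Fin (2 * n))))
        = fun _ : ℝ => (0 : EuclideanSpace ℝ (Fin (2 * n))) := by
      funext t; simp
    calc iteratedFDeriv ℝ k (fun t => A t (gradient (fun v => f t v) w₀)) 0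
        = iteratedFDeriv ℝ k (fun t : ℝ => A t (0 : EuclideanSpace ℝ (Fin (2 * n)))) 0 := key
      _ = 0 := by rw [hz, iteratedFDeriv_zero_fun]; rfl
  -- Step B: strong induction
  have P : ∀ k, k < r → iteratedFDeriv ℝ k (deriv w) 0 = 0 := by
    intro k
    induction k using Nat.strong_induction_on with
    | _ k IH =>
      intro hk
      have heq : ∀ m ≤ k, iteratedFDeriv ℝ m w 0 = iteratedFDeriv ℝ m (fun _ : ℝ => w₀) 0 := by
        intro m hm
        match m with
        | 0 =>
          ext v
          simp [iteratedFDeriv_zero_apply, hw0]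
        | (m + 1) =>
          rw [iteratedFDeriv_const_of_ne (Nat.succ_ne_zero m)]
          simp only [Pi.zero_apply]
          rw [my_iteratedFDeriv_eq_zero_iff, iteratedDeriv_succ']
          rw [← my_iteratedFDeriv_eq_zero_iff]
          exact IH m (Nat.lt_of_succ_le hm) (lt_trans (Nat.lt_of_succ_le hm) hk)
      have key := my_key_comp (fun p : ℝ × EuclideanSpace ℝ (Fin (2 * n)) =>
          A p.1 (gradient (fun v => f p.1 v) p.2)) hh w (fun _ => w₀) hw contDiff_const
          k heq k le_rfl
      rw [hwode]
      exact key.trans (SA k hk)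
  constructor
  · intro k hk
    rw [← my_iteratedFDeriv_eq_zero_iff]
    exact P k hk
  · intro k hk
    match k with
    | 0 => simp [iteratedDeriv_zero, hw0]
    | (m + 1) =>
      rw [iteratedDeriv_succ']
      have hds : (deriv fun t => w t - w₀) = deriv w := by
        funext t
        exact deriv_sub_const w₀
      rw [hds, ← my_iteratedFDeriv_eq_zero_iff]
      exact P m (Nat.lt_of_succ_lt_succ hk)
end

section
/- Let f : ℝ → ℝ be smooth, vanishing to infinite order at t = 0, with F(t) = ∫₀^t f ds ≤ 0, F(0) = 0, and suppose |f(t₀)| ≥ κ := λ^{-3/(εN)} for some t₀ > 0, where for all t ∈ [0, t₀], |f(t)| ≤ |f(t₀)|. Then for every positive integer M there is a constant C_M with |f(t)| ≤ C_M |t|^M, hence κ^{1/M} ≲ |t₀|, and by the rate-of-sign-change lemma min_{[0,t₀]} F ≤ −c κ^{1+1/M} = −c λ^{-3(1+1/M)/(εN)}. In particular if N > 3(1+1/M)/ε then min_{[0,t₀]} F ≤ −λ^{c'−1} for some c' > 0 and λ large. -/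
open Set Finset

section Helpers
variable {f : ℝ → ℝ}

lemma itDW_eq (hf : ContDiff ℝ (⊤ : ℕ∞) f) {s : Set ℝ} (hs : UniqueDiffOn ℝ s) (n : ℕ) :
    Set.EqOn (iteratedDerivWithin n f s) (iteratedDeriv n f) s := by
  induction n with
  | zero => intro x hx; simp [iteratedDerivWithin_zero, iteratedDeriv_zero]
  | succ n ih =>
    intro x hx
    rw [iteratedDerivWithin_succ, iteratedDeriv_succ, derivWithin_congr ih (ih hx)]
    exact DifferentiableAt.derivWithin
      ((hf.differentiable_iteratedDeriv n (by exact_mod_cast ENat.coe_lt_top n)).differentiableAt) (hs x hx)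

lemma taylor_est (hf : ContDiff ℝ (⊤ : ℕ∞) f) (n : ℕ) {u x B : ℝ} (hux : u < x)
    (hB : ∀ s ∈ Icc u x, |iteratedDeriv (n+1) f s| ≤ B) :
    |f x - ∑ i ∈ Finset.range (n+1), iteratedDeriv i f u * (x-u)^i / (Nat.factorial i)|
        ≤ B * (x-u)^(n+1) := by
  have hudiff := uniqueDiffOn_Icc hux
  have heq := itDW_eq hf hudiff
  obtain ⟨x', hx', hE⟩ := taylor_mean_remainder_lagrange (f := f) (n := n) hux.ne
    (by rw [uIcc_of_le hux.le]; exact (hf.of_le (by exact_mod_cast le_top)).contDiffOn)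
    (by
      rw [uIcc_of_le hux.le, uIoo_of_le hux.le]
      exact (((hf.differentiable_iteratedDeriv n (by exact_mod_cast ENat.coe_lt_top n)).differentiableOn).congr
        (fun y hy => heq n (Ioo_subset_Icc_self hy))))
  rw [uIcc_of_le hux.le] at hE
  rw [uIoo_of_le hux.le] at hx'
  have hT : taylorWithinEval f n (Icc u x) u x
      = ∑ i ∈ Finset.range (n+1), iteratedDeriv i f u * (x-u)^i / (Nat.factorial i) := by
    rw [taylor_within_apply]
    refine Finset.sum_congr rfl fun k hk => ?_
    rw [heq k (left_mem_Icc.2 hux.le)]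
    simp [smul_eq_mul]; ring
  rw [hT] at hE
  rw [hE, heq (n+1) (Ioo_subset_Icc_self hx')]
  have hd : |iteratedDeriv (n+1) f x'| ≤ B := hB x' (Ioo_subset_Icc_self hx')
  have hp : (0:ℝ) ≤ (x-u)^(n+1) := pow_nonneg (by linarith) _
  have hB0 : 0 ≤ B := (abs_nonneg _).trans hd
  have hfac : (1:ℝ) ≤ (Nat.factorial (n+1)) := by
    exact_mod_cast Nat.one_le_iff_ne_zero.2 (Nat.factorial_ne_zero _)
  rw [abs_div, abs_mul, abs_pow, abs_of_pos (sub_pos.2 hux), Nat.abs_cast]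
  calc |iteratedDeriv (n+1) f x'| * (x-u)^(n+1) / ((Nat.factorial (n+1) : ℕ) : ℝ)
      ≤ B * (x-u)^(n+1) / ((Nat.factorial (n+1) : ℕ) : ℝ) := by
        gcongr
    _ ≤ B * (x-u)^(n+1) := div_le_self (by positivity) hfac

lemma flat_bound_pos (hf : ContDiff ℝ (⊤ : ℕ∞) f) (hvan : ∀ k : ℕ, iteratedDeriv k f 0 = 0)
    (n : ℕ) {B : ℝ}
    (hB : ∀ s ∈ Icc (0:ℝ) 1, |iteratedDeriv (n+1) f s| ≤ B) :
    ∀ t ∈ Icc (0:ℝ) 1, |f t| ≤ B * t ^ (n+1) := by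
  intro t ht
  rcases eq_or_lt_of_le ht.1 with h0 | h0
  · have hf0 : f 0 = 0 := by have := hvan 0; rwa [iteratedDeriv_zero] at this
    simp [← h0, hf0]
  · have := taylor_est hf n h0 (fun s hs => hB s ⟨hs.1, le_trans hs.2 ht.2⟩)
    simpa [hvan] using this

lemma flat_bound (hf : ContDiff ℝ (⊤ : ℕ∞) f) (hvan : ∀ k : ℕ, iteratedDeriv k f 0 = 0)
    (n : ℕ) {B : ℝ}
    (hB : ∀ s ∈ Icc (-1:ℝ) 1, |iteratedDeriv (n+1) f s| ≤ B) :
    ∀ t ∈ Icc (-1:ℝ) 1, |f t| ≤ B * |t| ^ (n+1) := by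
  intro t ht
  rcases le_or_gt 0 t with h0 | h0
  · rw [abs_of_nonneg h0]
    exact flat_bound_pos hf hvan n (fun s hs => hB s ⟨by linarith [hs.1], hs.2⟩) t ⟨h0, ht.2⟩
  · set g : ℝ → ℝ := fun s => f (-s) with hg
    have hgc : ContDiff ℝ (⊤ : ℕ∞) g := hf.comp (contDiff_neg)
    have hgv : ∀ k : ℕ, iteratedDeriv k g 0 = 0 := by
      intro k; rw [hg]
      rw [iteratedDeriv_comp_neg k f 0, neg_zero, hvan k, smul_zero]
    have hgB : ∀ s ∈ Icc (0:ℝ) 1, |iteratedDeriv (n+1) g s| ≤ B := by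
      intro s hs
      rw [hg, iteratedDeriv_comp_neg (n+1) f s]
      rw [smul_eq_mul, abs_mul, abs_pow, abs_neg, abs_one, one_pow, one_mul]
      exact hB (-s) ⟨by linarith [hs.2], by linarith [hs.1]⟩
    have := flat_bound_pos hgc hgv n hgB (-t) ⟨by linarith, by linarith [ht.1]⟩
    rw [hg] at this
    simpa [abs_of_neg h0] using this

lemma poly_coeff_bound (m : ℕ) : ∃ γ : ℝ, 1 ≤ γ ∧ ∀ (c : Fin m → ℝ) (b : ℝ),
    (∀ y ∈ Icc (0:ℝ) 1, |∑ i, c i * y ^ (i:ℕ)| ≤ b) → ∀ i, |c i| ≤ γ * b := by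
  let T : (Fin m → ℝ) →ₗ[ℝ] C(Icc (0:ℝ) 1, ℝ) :=
  { toFun := fun c => ⟨fun y => ∑ i, c i * (y:ℝ) ^ (i:ℕ),
      continuous_finset_sum _ fun i _ => continuous_const.mul (continuous_subtype_val.pow _)⟩
    map_add' := by
      intro c d; ext y; simp [add_mul, Finset.sum_add_distrib]
    map_smul' := by
      intro r c; ext y; simp [Finset.mul_sum, mul_assoc] }
  have hTapp : ∀ (c : Fin m → ℝ) (y : Icc (0:ℝ) 1), T c y = ∑ i, c i * (y:ℝ) ^ (i:ℕ) :=
    fun c y => rfl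
  have hker : ∀ c, T c = 0 → c = 0 := by
    intro c hc
    set p : Polynomial ℝ := ∑ i : Fin m, Polynomial.C (c i) * Polynomial.X ^ (i:ℕ) with hp
    have hroot : ∀ y ∈ Icc (0:ℝ) 1, p.eval y = 0 := by
      intro y hy
      have : T c ⟨y, hy⟩ = 0 := by rw [hc]; rfl
      rw [hTapp] at this
      rw [hp]
      simpa [Polynomial.eval_finset_sum] using this
    have hp0 : p = 0 := by
      apply Polynomial.eq_zero_of_infinite_isRoot
      apply Set.Infinite.mono (s := Icc (0:ℝ) 1)
      · exact fun y hy => hroot y hy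
      · exact Set.Icc_infinite (by norm_num)
    funext i
    have : p.coeff (i : ℕ) = c i := by
      rw [hp, Polynomial.finset_sum_coeff]
      rw [Finset.sum_eq_single i]
      · simp
      · intro j _ hji
        simp only [Polynomial.coeff_C_mul, Polynomial.coeff_X_pow]
        rw [if_neg (fun h => hji (Fin.ext (h : (i:ℕ) = (j:ℕ))).symm), mul_zero]
      · simp
    rw [hp0] at this
    simp [← this]
  have hinj : Function.Injective T := by
    intro c d hcd
    have : T (c - d) = 0 := by rw [map_sub, hcd, sub_self]
    exact sub_eq_zero.1 (hker _ this)
  let e := LinearEquiv.ofInjective T hinj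
  haveI : FiniteDimensional ℝ (LinearMap.range T) := e.finiteDimensional
  letI : SeminormedAddCommGroup (LinearMap.range T) := inferInstance
  letI : NormedSpace ℝ (LinearMap.range T) := Submodule.normedSpace (LinearMap.range T)
  let S := LinearMap.toContinuousLinearMap (e.symm.toLinearMap)
  refine ⟨max ‖S‖ 1, le_max_right _ _, ?_⟩
  intro c b hb i
  have hb0 : 0 ≤ b := le_trans (abs_nonneg _) (hb 0 ⟨le_refl _, by norm_num⟩)
  have hTcb : ‖T c‖ ≤ b := by
    rw [ContinuousMap.norm_le _ hb0]
    intro y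
    rw [hTapp, Real.norm_eq_abs]
    exact hb y y.2
  have hc : c = S (e c) := by
    show c = e.symm (e c); rw [LinearEquiv.symm_apply_apply]
  have hnormec : ‖e c‖ = ‖T c‖ := by
    have h2 : (e c : C(Icc (0:ℝ) 1, ℝ)) = T c := by
      simp [e, LinearEquiv.ofInjective_apply]
    rw [← h2]; rfl
  calc |c i| ≤ ‖c‖ := by
        rw [← Real.norm_eq_abs]; exact norm_le_pi_norm c i
    _ = ‖S (e c)‖ := by rw [← hc]
    _ ≤ ‖S‖ * ‖e c‖ := S.le_opNorm _
    _ = ‖S‖ * ‖T c‖ := by rw [hnormec]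
    _ ≤ max ‖S‖ 1 * b := by
        apply mul_le_mul (le_max_left _ _) hTcb (norm_nonneg _)
        exact le_trans (by norm_num) (le_max_right ‖S‖ 1)

lemma pow_sub_pow_le_aux {x y m : ℝ} (hy : 0 ≤ y) (hyx : y ≤ x) (hxm : x ≤ m) :
    ∀ i : ℕ, x ^ (i+1) - y ^ (i+1) ≤ ((i:ℝ)+1) * m ^ i * (x - y) := by
  intro i
  have hx0 : 0 ≤ x := hy.trans hyx
  have hm0 : 0 ≤ m := hx0.trans hxm
  induction i with
  | zero => norm_num
  | succ i ih =>
    have h1 : 0 ≤ x ^ (i+1) - y ^ (i+1) := sub_nonneg.2 (pow_le_pow_left₀ hy hyx _)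
    have h2 : y ^ (i+1) ≤ m ^ (i+1) := pow_le_pow_left₀ hy (hyx.trans hxm) _
    have key : x ^ (i+1+1) - y ^ (i+1+1)
        = x * (x ^ (i+1) - y ^ (i+1)) + y ^ (i+1) * (x - y) := by ring
    rw [key]
    have hxy : 0 ≤ x - y := sub_nonneg.2 hyx
    calc x * (x ^ (i+1) - y ^ (i+1)) + y ^ (i+1) * (x - y)
        ≤ m * (((i:ℝ)+1) * m ^ i * (x - y)) + m ^ (i+1) * (x - y) := by
          apply add_le_add
          · exact mul_le_mul hxm ih h1 hm0
          · exact mul_le_mul_of_nonneg_right h2 hxy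
      _ = ((i:ℝ)+1+1) * m ^ (i+1) * (x - y) := by ring
      _ = ((((i+1):ℕ):ℝ)+1) * m ^ (i+1) * (x - y) := by push_cast; ring

lemma alg1 (G A C0 W Fc Jr : ℝ) (hW : W ≠ 0) (hFc : Fc ≠ 0) (j : ℕ) :
    (G * A / W^(j+1)) * (Jr * (2*W)^j * (C0*W)) / Fc = G * A * C0 * 2^j * (Jr/Fc) := by
  field_simp
  ring

lemma alg3 (c0 q Bp A : ℝ) (hBp : Bp ≠ 0) :
    c0 * ((q / Bp)/2) * (A/2) = (c0/(4*Bp)) * (A * q) := by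
  field_simp
  ring

lemma alg2 (P G X A : ℝ) (hG : G ≠ 0) (hX : X ≠ 0) (hP : P ≠ 0) :
    P * (G * X * (4*P^2*G*X)⁻¹ * A) = A/(4*P) := by
  field_simp

end Helpers

set_option maxHeartbeats 1000000 in
/-- infinite-order case of Lemma 6.2: if `f` is smooth and
vanishes to infinite order at `0`, `F(t) = ∫₀^t f ≤ 0`, `F 0 = 0`, and
`κ = λ^{-3/(εN)} ≤ |f t₀|` with `|f| ≤ |f t₀|` on `[0, t₀]`, then
`|f t| ≤ C_M |t|^M` for every `M`, hence `κ^{1/M} ≲ t₀`, and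
`min_{[0,t₀]} F ≤ -c κ^{1+1/M}`; if moreover `N > 3(1+1/M)/ε` then
`min_{[0,t₀]} F ≤ -λ^{c'-1}` for some `c' > 0` and `λ` large. -/
theorem stmt_10 (f F : ℝ → ℝ) (ε : ℝ) (M N : ℕ)
    (hf : ContDiff ℝ (⊤ : ℕ∞) f)
    (hvan : ∀ n : ℕ, iteratedDeriv n f 0 = 0)
    (hF : ∀ t, F t = ∫ u in (0:ℝ)..t, f u)
    (hFneg : ∀ t, F t ≤ 0)
    (hε : 0 < ε) (hε1 : ε ≤ 1) (hM : 1 ≤ M)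
    (hN : 3 * (1 + 1 / (M : ℝ)) / ε < (N : ℝ)) :
    ∃ (C cc c' lam₀ : ℝ), 0 < C ∧ 0 < cc ∧ 0 < c' ∧ 1 ≤ lam₀ ∧
      (∀ t ∈ Set.Icc (-1 : ℝ) 1, |f t| ≤ C * |t| ^ (M : ℕ)) ∧
      ∀ lam : ℝ, lam₀ ≤ lam →
        ∀ t₀ : ℝ, 0 < t₀ → t₀ ≤ 1 →
          lam ^ (-(3 : ℝ) / (ε * (N : ℝ))) ≤ |f t₀| →
          (∀ t ∈ Set.Icc (0 : ℝ) t₀, |f t| ≤ |f t₀|) →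
          (∃ t' ∈ Set.Icc (0 : ℝ) t₀,
              F t' ≤ -cc * (lam ^ (-(3 : ℝ) / (ε * (N : ℝ)))) ^ (1 + 1 / (M : ℝ))) ∧
          (∃ t' ∈ Set.Icc (0 : ℝ) t₀, F t' ≤ -lam ^ (c' - 1)) := by
  obtain ⟨n, rfl⟩ : ∃ n, M = n + 1 := ⟨M - 1, (Nat.succ_pred_eq_of_pos hM).symm⟩
  have hfc : Continuous f := hf.continuous
  obtain ⟨B, hBb⟩ := (isCompact_Icc (a := (-1:ℝ)) (b := 1)).exists_bound_of_continuousOn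
    ((hf.continuous_iteratedDeriv (n+1) (by exact_mod_cast le_top)).continuousOn)
  set B₀ : ℝ := max B 1 with hB₀def
  have hB₀1 : 1 ≤ B₀ := le_max_right _ _
  have hB₀0 : 0 < B₀ := lt_of_lt_of_le one_pos hB₀1
  have hB₀ : ∀ s ∈ Set.Icc (-1:ℝ) 1, |iteratedDeriv (n+1) f s| ≤ B₀ := fun s hs =>
    le_trans (by rw [← Real.norm_eq_abs]; exact hBb s hs) (le_max_left _ _)
  have hC : ∀ t ∈ Set.Icc (-1:ℝ) 1, |f t| ≤ B₀ * |t| ^ (n+1) := flat_bound hf hvan n hB₀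
  obtain ⟨γ, hγ1, hγ⟩ := poly_coeff_bound (n+1)
  set γ₁ : ℝ := 2 * γ * (Nat.factorial (n+1)) with hγ₁def
  have hfac1 : (1:ℝ) ≤ (Nat.factorial (n+1)) := by
    exact_mod_cast Nat.one_le_iff_ne_zero.2 (Nat.factorial_ne_zero _)
  have hγ₁1 : 1 ≤ γ₁ := by
    calc (1:ℝ) ≤ 2 * γ := by linarith
      _ ≤ γ₁ := by rw [hγ₁def]; nlinarith
  have hγ₁0 : 0 < γ₁ := lt_of_lt_of_le one_pos hγ₁1
  set c₀ : ℝ := (4 * ((n:ℝ)+1)^2 * γ₁ * 2^(n+1))⁻¹ with hc₀def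
  have hc₀0 : 0 < c₀ := by
    rw [hc₀def]; apply inv_pos.2; positivity
  have hc₀1 : c₀ ≤ 1 := by
    rw [hc₀def]
    rw [inv_le_one_iff₀]
    right
    have h2p : (1:ℝ) ≤ 2^(n+1) := one_le_pow₀ (by norm_num)
    have hn1 : (1:ℝ) ≤ ((n:ℝ)+1)^2 := by nlinarith [Nat.cast_nonneg (α := ℝ) n]
    have ha1 : (1:ℝ) ≤ 4*((n:ℝ)+1)^2 := by nlinarith
    have ha2 : (1:ℝ) ≤ 4*((n:ℝ)+1)^2*γ₁ := by
      have := mul_le_mul ha1 hγ₁1 (by norm_num) (by linarith); linarith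
    have := mul_le_mul ha2 h2p (by norm_num) (by linarith)
    linarith
  set B₁ : ℝ := 8 * B₀ with hB₁def
  have hB₁0 : 0 < B₁ := by rw [hB₁def]; linarith
  have hB₁1 : 1 ≤ B₁ := by rw [hB₁def]; linarith
  set cc : ℝ := c₀ / (4 * B₁ ^ ((1:ℝ)/((n:ℝ)+1))) with hccdef
  have hBrp : 0 < B₁ ^ ((1:ℝ)/((n:ℝ)+1)) := Real.rpow_pos_of_pos hB₁0 _
  have hBrp1 : 1 ≤ B₁ ^ ((1:ℝ)/((n:ℝ)+1)) := by
    calc (1:ℝ) = B₁ ^ (0:ℝ) := (Real.rpow_zero _).symm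
      _ ≤ B₁ ^ ((1:ℝ)/((n:ℝ)+1)) := Real.rpow_le_rpow_of_exponent_le hB₁1 (by positivity)
  have hcc0 : 0 < cc := div_pos hc₀0 (by linarith)
  have hcc1 : cc ≤ 1 := by
    rw [hccdef, div_le_one (by linarith)]
    linarith
  set e : ℝ := 1 + 1 / (((n+1:ℕ)):ℝ) with hedef
  have hMr : (((n+1:ℕ)):ℝ) = (n:ℝ)+1 := by push_cast; ring
  have he1 : 1 ≤ e := by
    have : (0:ℝ) ≤ 1/(((n+1:ℕ)):ℝ) := by positivity
    rw [hedef]; linarith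
  have hNpos : (0:ℝ) < (N:ℝ) := lt_trans (by positivity) hN
  set β : ℝ := 3 / (ε * (N:ℝ)) * e with hβdef
  have hβ0 : 0 < β := by
    apply mul_pos (div_pos (by norm_num) (mul_pos hε hNpos)) (by linarith)
  have hβ1 : β < 1 := by
    have hrw : β = (3 * e / ε) / (N:ℝ) := by rw [hβdef]; ring
    rw [hrw, div_lt_one hNpos]
    exact hN
  set c' : ℝ := (1 - β)/2 with hc'def
  have hc'0 : 0 < c' := by rw [hc'def]; linarith
  set lam₀ : ℝ := max 1 (cc⁻¹ ^ ((1:ℝ)/c')) with hlam₀def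
  refine ⟨B₀, cc, c', lam₀, hB₀0, hcc0, hc'0, le_max_left _ _, hC, ?_⟩
  intro lam hlam t₀ ht₀ ht₀1 hκa hmax
  set κ : ℝ := lam ^ (-(3:ℝ) / (ε * (N:ℝ))) with hκdef
  have hlam1 : (1:ℝ) ≤ lam := le_trans (le_max_left _ _) hlam
  have hlam0 : (0:ℝ) < lam := lt_of_lt_of_le one_pos hlam1
  have hκ0 : 0 < κ := Real.rpow_pos_of_pos hlam0 _
  set a : ℝ := |f t₀| with hadef
  have ha0 : 0 < a := lt_of_lt_of_le hκ0 hκa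
  have hat : a ≤ B₁ * t₀ ^ (n+1) := by
    have h1 := hC t₀ ⟨by linarith, ht₀1⟩
    rw [abs_of_pos ht₀] at h1
    have h2 : B₀ * t₀^(n+1) ≤ B₁ * t₀^(n+1) := by
      apply mul_le_mul_of_nonneg_right (by rw [hB₁def]; linarith) (by positivity)
    exact le_trans h1 h2
  have haB₁ : 0 < a / B₁ := div_pos ha0 hB₁0
  set r : ℝ := (a / B₁) ^ ((1:ℝ)/((n:ℝ)+1)) with hrdef
  have hr0 : 0 < r := Real.rpow_pos_of_pos haB₁ _
  have hrM : r ^ (n+1) = a / B₁ := by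
    rw [hrdef, ← Real.rpow_natCast ((a / B₁) ^ ((1:ℝ)/((n:ℝ)+1))) (n+1),
      ← Real.rpow_mul haB₁.le]
    rw [show (1:ℝ)/((n:ℝ)+1) * ((n+1:ℕ):ℝ) = 1 by
      rw [hMr]; field_simp]
    exact Real.rpow_one _
  have hrt : r ≤ t₀ := by
    have h1 : a / B₁ ≤ t₀ ^ (n+1) := (div_le_iff₀ hB₁0).2 (by rw [mul_comm]; exact hat)
    calc r ≤ (t₀ ^ (n+1) : ℝ) ^ ((1:ℝ)/((n:ℝ)+1)) :=
          Real.rpow_le_rpow haB₁.le h1 (by positivity)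
      _ = t₀ := by
          rw [← Real.rpow_natCast t₀ (n+1), ← Real.rpow_mul ht₀.le]
          rw [show ((n+1:ℕ):ℝ) * ((1:ℝ)/((n:ℝ)+1)) = 1 by rw [hMr]; field_simp]
          exact Real.rpow_one _
  set w : ℝ := r / 2 with hwdef
  set st : ℝ := c₀ * w with hstdef
  set u : ℝ := t₀ - w - st with hudef
  set u' : ℝ := t₀ - st with hu'def
  have hw0 : 0 < w := half_pos hr0
  have hst0 : 0 < st := mul_pos hc₀0 hw0
  have hstw : st ≤ w := by
    calc st = c₀ * w := hstdef
      _ ≤ 1 * w := by apply mul_le_mul_of_nonneg_right hc₀1 hw0.le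
      _ = w := one_mul w
  have hu0 : 0 ≤ u := by
    have : w + w = r := by rw [hwdef]; ring
    simp only [hudef]; linarith
  have huu' : u < u' := by simp only [hudef, hu'def]; linarith
  have hu't : u' < t₀ := by simp only [hu'def]; linarith
  have hBw : B₀ * (2*w)^(n+1) ≤ a / 8 := by
    have h2w : (2*w)^(n+1) = r^(n+1) := by rw [hwdef]; ring_nf
    rw [h2w, hrM, hB₁def]
    rw [show B₀ * (a / (8 * B₀)) = a / 8 by field_simp]
  have hmax' : ∀ t, 0 ≤ t → t ≤ t₀ → |f t| ≤ a := fun t h1 h2 => hmax t ⟨h1, h2⟩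
  have hB₀' : ∀ x y : ℝ, 0 ≤ x → y ≤ t₀ →
      ∀ s ∈ Set.Icc x y, |iteratedDeriv (n+1) f s| ≤ B₀ := by
    intro x y hx hy s hs
    exact hB₀ s ⟨by linarith [hs.1], by linarith [hs.2]⟩
  have hLK : ∀ i : Fin (n+1), |iteratedDeriv (i:ℕ) f u| ≤ γ₁ * a / w ^ (i:ℕ) := by
    set c : Fin (n+1) → ℝ :=
      fun i => iteratedDeriv (i:ℕ) f u * w ^ (i:ℕ) / (Nat.factorial (i:ℕ)) with hcdef
    have hsup : ∀ z ∈ Set.Icc (0:ℝ) 1, |∑ i, c i * z ^ (i:ℕ)| ≤ 2 * a := by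
      intro z hz
      have hsum : ∑ i, c i * z ^ (i:ℕ)
          = ∑ k ∈ Finset.range (n+1),
              iteratedDeriv k f u * (w*z) ^ k / (Nat.factorial k) := by
        rw [Fin.sum_univ_eq_sum_range
          (fun k => iteratedDeriv k f u * w ^ k / (Nat.factorial k) * z ^ k)]
        exact Finset.sum_congr rfl fun k _ => by rw [mul_pow]; ring
      rw [hsum]
      rcases eq_or_lt_of_le hz.1 with hz0 | hz0
      · rw [← hz0]
        rw [Finset.sum_eq_single_of_mem 0 (Finset.mem_range.2 (Nat.succ_pos n))
          (fun b _ hb => by simp [zero_pow hb])]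
        simp only [mul_zero, pow_zero, mul_one, Nat.factorial_zero, Nat.cast_one, div_one]
        rw [iteratedDeriv_zero]
        have := hmax' u hu0 (by linarith)
        linarith
      · set y : ℝ := w * z with hydef
        have hy0 : 0 < y := mul_pos hw0 hz0
        have hyw : y ≤ w := by
          calc y = w * z := hydef
            _ ≤ w * 1 := mul_le_mul_of_nonneg_left hz.2 hw0.le
            _ = w := mul_one w
        have huy : u < u + y := by linarith
        have huyt : u + y ≤ t₀ := by simp only [hudef]; linarith
        have htay := taylor_est hf n huy (hB₀' u (u+y) hu0 huyt)
        have hxy : (u + y) - u = y := by ring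
        rw [hxy] at htay
        have hfb : |f (u+y)| ≤ a := hmax' (u+y) (by linarith) huyt
        have hrem : B₀ * y^(n+1) ≤ a := by
          calc B₀ * y^(n+1) ≤ B₀ * (2*w)^(n+1) := by
                apply mul_le_mul_of_nonneg_left _ hB₀0.le
                apply pow_le_pow_left₀ hy0.le (by linarith)
            _ ≤ a / 8 := hBw
            _ ≤ a := by linarith
        calc |∑ k ∈ Finset.range (n+1),
                iteratedDeriv k f u * y ^ k / (Nat.factorial k)|
            = |f (u+y) - (f (u+y) - ∑ k ∈ Finset.range (n+1),
                iteratedDeriv k f u * y ^ k / (Nat.factorial k))| := by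
              rw [sub_sub_cancel]
          _ ≤ |f (u+y)| + |f (u+y) - ∑ k ∈ Finset.range (n+1),
                iteratedDeriv k f u * y ^ k / (Nat.factorial k)| := abs_sub _ _
          _ ≤ a + a := add_le_add hfb (le_trans htay hrem)
          _ = 2 * a := by ring
    intro i
    have hci := hγ c (2*a) hsup i
    have hwi : (0:ℝ) < w ^ (i:ℕ) := pow_pos hw0 _
    have hfa : (0:ℝ) < (Nat.factorial (i:ℕ) : ℝ) := by
      exact_mod_cast Nat.factorial_pos _
    have habs : |c i| = |iteratedDeriv (i:ℕ) f u| * w ^ (i:ℕ) / (Nat.factorial (i:ℕ)) := by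
      rw [hcdef]
      rw [abs_div, abs_mul, abs_pow, abs_of_pos hw0, Nat.abs_cast]
    rw [habs] at hci
    rw [div_le_iff₀ hfa] at hci
    rw [le_div_iff₀ hwi]
    calc |iteratedDeriv (i:ℕ) f u| * w ^ (i:ℕ)
        ≤ γ * (2*a) * (Nat.factorial (i:ℕ)) := hci
      _ ≤ γ₁ * a := by
          rw [hγ₁def]
          have hfle : ((Nat.factorial (i:ℕ)):ℝ) ≤ ((Nat.factorial (n+1)):ℝ) := by
            exact_mod_cast Nat.factorial_le (by omega : (i:ℕ) ≤ n+1)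
          have hγnn : (0:ℝ) ≤ γ := le_trans zero_le_one hγ1
          have hγ0 : (0:ℝ) ≤ 2 * γ * a := by
            apply mul_nonneg (mul_nonneg (by norm_num) hγnn) ha0.le
          calc γ * (2*a) * ((Nat.factorial (i:ℕ)):ℝ)
              = (2*γ*a) * ((Nat.factorial (i:ℕ)):ℝ) := by ring
            _ ≤ (2*γ*a) * ((Nat.factorial (n+1)):ℝ) := mul_le_mul_of_nonneg_left hfle hγ0
            _ = 2*γ*((Nat.factorial (n+1)):ℝ)*a := by ring
  set T : ℝ → ℝ :=
    fun x => ∑ k ∈ Finset.range (n+1), iteratedDeriv k f u * (x-u)^k / (Nat.factorial k)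
    with hTdef
  have hrem : ∀ x, u < x → x ≤ t₀ → |f x - T x| ≤ a/8 := by
    intro x hx1 hx2
    have htay := taylor_est hf n hx1 (hB₀' u x hu0 hx2)
    refine le_trans htay (le_trans ?_ hBw)
    apply mul_le_mul_of_nonneg_left _ hB₀0.le
    apply pow_le_pow_left₀ (by linarith) (by simp only [hudef] at hx2 ⊢; linarith)
  have hterm : ∀ t, u' ≤ t → t ≤ t₀ → ∀ k ∈ Finset.range (n+1),
      |iteratedDeriv k f u * ((t₀-u)^k - (t-u)^k) / (Nat.factorial k)|
        ≤ γ₁ * 2^(n+1) * c₀ * a := by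
    intro t h1 h2 k hk
    have hbase : (0:ℝ) ≤ γ₁ * a * c₀ := mul_nonneg (mul_nonneg hγ₁0.le ha0.le) hc₀0.le
    have hRHSnn : (0:ℝ) ≤ γ₁ * 2^(n+1) * c₀ * a := by
      have := mul_nonneg (mul_nonneg hbase (pow_nonneg (by norm_num : (0:ℝ) ≤ 2) (n+1))) ha0.le
      calc (0:ℝ) ≤ γ₁ * a * c₀ * 2^(n+1) :=
            mul_nonneg hbase (pow_nonneg (by norm_num) _)
        _ = γ₁ * 2^(n+1) * c₀ * a := by ring
    rcases Nat.eq_zero_or_pos k with hk0 | hkpos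
    · rw [hk0]; simp [hRHSnn]
    obtain ⟨j, rfl⟩ : ∃ j, k = j + 1 := ⟨k - 1, (Nat.succ_pred_eq_of_pos hkpos).symm⟩
    have hjn : j + 1 < n + 1 := Finset.mem_range.1 hk
    have htu0 : 0 ≤ t - u := by simp only [hudef, hu'def] at h1 ⊢; linarith
    have htut : t - u ≤ t₀ - u := by linarith
    have htu2w : t₀ - u ≤ 2*w := by simp only [hudef]; linarith
    have hΔle := pow_sub_pow_le_aux htu0 htut htu2w j
    have hΔ0 : 0 ≤ (t₀-u)^(j+1) - (t-u)^(j+1) :=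
      sub_nonneg.2 (pow_le_pow_left₀ htu0 htut _)
    have hcoef0 : (0:ℝ) ≤ ((j:ℝ)+1) * (2*w)^j :=
      mul_nonneg (by positivity) (pow_nonneg (by linarith) _)
    have htt : (t₀ - u) - (t - u) ≤ st := by simp only [hu'def] at h1; linarith
    have hΔle' : (t₀-u)^(j+1) - (t-u)^(j+1) ≤ ((j:ℝ)+1) * (2*w)^j * st := by
      calc (t₀-u)^(j+1) - (t-u)^(j+1)
          ≤ ((j:ℝ)+1) * (2*w)^j * ((t₀-u) - (t-u)) := hΔle
        _ ≤ ((j:ℝ)+1) * (2*w)^j * st := mul_le_mul_of_nonneg_left htt hcoef0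
    have hd : |iteratedDeriv (j+1) f u| ≤ γ₁ * a / w^(j+1) := hLK ⟨j+1, hjn⟩
    have hfacpos : (0:ℝ) < ((Nat.factorial (j+1)):ℝ) := by exact_mod_cast Nat.factorial_pos _
    have hdnn : (0:ℝ) ≤ γ₁ * a / w^(j+1) := le_trans (abs_nonneg _) hd
    calc |iteratedDeriv (j+1) f u * ((t₀-u)^(j+1) - (t-u)^(j+1)) / (Nat.factorial (j+1))|
        = |iteratedDeriv (j+1) f u| * ((t₀-u)^(j+1) - (t-u)^(j+1))
            / ((Nat.factorial (j+1)):ℝ) := by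
          rw [abs_div, abs_mul, abs_of_nonneg hΔ0, Nat.abs_cast]
      _ ≤ (γ₁ * a / w^(j+1)) * (((j:ℝ)+1) * (2*w)^j * st) / ((Nat.factorial (j+1)):ℝ) := by
          apply div_le_div_of_nonneg_right ?_ hfacpos.le
          exact mul_le_mul hd hΔle' hΔ0 hdnn
      _ = γ₁ * a * c₀ * 2^j * (((j:ℝ)+1) / ((Nat.factorial (j+1)):ℝ)) := by
          rw [hstdef]
          exact alg1 γ₁ a c₀ w _ ((j:ℝ)+1) hw0.ne' hfacpos.ne' j
      _ ≤ γ₁ * 2^(n+1) * c₀ * a := by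
          have h2j : (2:ℝ)^j ≤ 2^(n+1) := pow_le_pow_right₀ (by norm_num) (by omega)
          have hjf : ((j:ℝ)+1) / ((Nat.factorial (j+1)):ℝ) ≤ 1 := by
            rw [div_le_one hfacpos]
            exact_mod_cast Nat.self_le_factorial (j+1)
          have hq0 : (0:ℝ) ≤ ((j:ℝ)+1) / ((Nat.factorial (j+1)):ℝ) := by positivity
          have e1 : γ₁ * a * c₀ * 2^j ≤ γ₁ * a * c₀ * 2^(n+1) :=
            mul_le_mul_of_nonneg_left h2j hbase
          have e2 : γ₁ * a * c₀ * 2^j * (((j:ℝ)+1) / ((Nat.factorial (j+1)):ℝ))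
              ≤ (γ₁ * a * c₀ * 2^(n+1)) * 1 :=
            mul_le_mul e1 hjf hq0 (mul_nonneg hbase (pow_nonneg (by norm_num) _))
          calc γ₁ * a * c₀ * 2^j * (((j:ℝ)+1) / ((Nat.factorial (j+1)):ℝ))
              ≤ (γ₁ * a * c₀ * 2^(n+1)) * 1 := e2
            _ = γ₁ * 2^(n+1) * c₀ * a := by ring
  have hTdiff : ∀ t, u' ≤ t → t ≤ t₀ → |T t₀ - T t| ≤ a/4 := by
    intro t h1 h2
    have hsub : T t₀ - T t = ∑ k ∈ Finset.range (n+1),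
        iteratedDeriv k f u * ((t₀-u)^k - (t-u)^k) / (Nat.factorial k) := by
      rw [hTdef, ← Finset.sum_sub_distrib]
      exact Finset.sum_congr rfl fun k _ => by ring
    rw [hsub]
    refine le_trans (Finset.abs_sum_le_sum_abs _ _) ?_
    refine le_trans (Finset.sum_le_sum (hterm t h1 h2)) ?_
    rw [Finset.sum_const, Finset.card_range, nsmul_eq_mul]
    have heq2 : ((n+1:ℕ):ℝ) * (γ₁ * 2^(n+1) * c₀ * a) = a / (4*((n:ℝ)+1)) := by
      rw [hc₀def, hMr]
      exact alg2 ((n:ℝ)+1) γ₁ (2^(n+1)) a hγ₁0.ne' (by positivity) (by positivity)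
    rw [heq2]
    apply div_le_div_of_nonneg_left ha0.le (by norm_num)
    have : (0:ℝ) ≤ (n:ℝ) := Nat.cast_nonneg n
    linarith
  have hkey : ∀ t, u' ≤ t → t ≤ t₀ → |f t₀ - f t| ≤ a/2 := by
    intro t h1 h2
    have r1 := hrem t₀ (by linarith) le_rfl
    have r2 := hrem t (by linarith) h2
    have r3 := hTdiff t h1 h2
    have hdecomp : f t₀ - f t = (f t₀ - T t₀) + (T t₀ - T t) + (T t - f t) := by ring
    rw [hdecomp]
    have habs1 := abs_add_le ((f t₀ - T t₀) + (T t₀ - T t)) (T t - f t)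
    have habs2 := abs_add_le (f t₀ - T t₀) (T t₀ - T t)
    have r2' : |T t - f t| ≤ a/8 := by rw [abs_sub_comm]; exact r2
    linarith
  have hFt : F t₀ = F u' + ∫ x in u'..t₀, f x := by
    rw [hF t₀, hF u']
    rw [← intervalIntegral.integral_add_adjacent_intervals
      (hfc.intervalIntegrable 0 u') (hfc.intervalIntegrable u' t₀)]
  have hIf : IntervalIntegrable f MeasureTheory.volume u' t₀ := hfc.intervalIntegrable _ _
  obtain ⟨t', ht'mem, hFt'⟩ : ∃ t' ∈ Set.Icc (0:ℝ) t₀, F t' ≤ -(st * (a/2)) := by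
    rcases abs_cases (f t₀) with ⟨hfa, hf0⟩ | ⟨hfa, hf0⟩
    · have haf : a = f t₀ := by rw [hadef, hfa]
      refine ⟨u', ⟨by linarith, by linarith⟩, ?_⟩
      have hlow : ∀ x ∈ Set.Icc u' t₀, a/2 ≤ f x := by
        intro x hx
        have h1 := le_trans (le_abs_self _) (hkey x hx.1 hx.2)
        linarith
      have hint : st * (a/2) ≤ ∫ x in u'..t₀, f x := by
        have h2 := intervalIntegral.integral_mono_on (by linarith : u' ≤ t₀)
          intervalIntegrable_const hIf hlow
        rw [intervalIntegral.integral_const, smul_eq_mul] at h2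
        have h3 : t₀ - u' = st := by rw [hu'def]; ring
        rw [h3] at h2
        linarith
      have := hFneg t₀
      linarith
    · have haf : a = -(f t₀) := by rw [hadef, hfa]
      refine ⟨t₀, ⟨by linarith, le_rfl⟩, ?_⟩
      have hup : ∀ x ∈ Set.Icc u' t₀, f x ≤ -(a/2) := by
        intro x hx
        have h2 := hkey x hx.1 hx.2
        have h1 := neg_le_abs (f t₀ - f x)
        linarith
      have hint : ∫ x in u'..t₀, f x ≤ -(st * (a/2)) := by
        have h2 := intervalIntegral.integral_mono_on (by linarith : u' ≤ t₀)
          hIf intervalIntegrable_const hup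
        rw [intervalIntegral.integral_const, smul_eq_mul] at h2
        have h3 : t₀ - u' = st := by rw [hu'def]; ring
        rw [h3] at h2
        linarith
      have := hFneg u'
      linarith
  have hBpne : (B₁ ^ ((1:ℝ)/((n:ℝ)+1))) ≠ 0 := hBrp.ne'
  have hrsplit : r = a ^ ((1:ℝ)/((n:ℝ)+1)) / B₁ ^ ((1:ℝ)/((n:ℝ)+1)) := by
    rw [hrdef, Real.div_rpow ha0.le hB₁0.le]
  have hae : a ^ e = a * a ^ ((1:ℝ)/((n:ℝ)+1)) := by
    rw [hedef, hMr, Real.rpow_add ha0, Real.rpow_one]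
  have hstval : st * (a/2) = cc * a ^ e := by
    calc st * (a/2)
        = c₀ * ((a ^ ((1:ℝ)/((n:ℝ)+1)) / B₁ ^ ((1:ℝ)/((n:ℝ)+1)))/2) * (a/2) := by
          rw [hstdef, hwdef, hrsplit]
      _ = (c₀/(4 * B₁ ^ ((1:ℝ)/((n:ℝ)+1)))) * (a * a ^ ((1:ℝ)/((n:ℝ)+1))) :=
          alg3 _ _ _ _ hBpne
      _ = cc * a ^ e := by rw [hccdef, hae]
  have hκe : κ ^ e ≤ a ^ e := Real.rpow_le_rpow hκ0.le hκa (by linarith)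
  have hgoal1 : F t' ≤ -cc * κ ^ e := by
    calc F t' ≤ -(st * (a/2)) := hFt'
      _ ≤ -(cc * κ ^ e) := by
          rw [hstval]
          apply neg_le_neg
          exact mul_le_mul_of_nonneg_left hκe hcc0.le
      _ = -cc * κ ^ e := by ring
  have hκβ : κ ^ e = lam ^ (-β) := by
    rw [hκdef, ← Real.rpow_mul hlam0.le]
    congr 1
    rw [hβdef]; ring
  have hsplit : lam ^ (c' - 1) = lam ^ (-β) * lam ^ (-c') := by
    rw [← Real.rpow_add hlam0]
    congr 1
    rw [hc'def]; ring
  have hlamc : lam ^ (-c') ≤ cc := by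
    have hccinv0 : (0:ℝ) < cc⁻¹ := inv_pos.2 hcc0
    have hup : cc⁻¹ ^ ((1:ℝ)/c') ≤ lam := le_trans (le_max_right _ _) hlam
    have h4 : cc⁻¹ ≤ lam ^ c' := by
      have h5 := Real.rpow_le_rpow (Real.rpow_nonneg hccinv0.le _) hup hc'0.le
      rw [← Real.rpow_mul hccinv0.le] at h5
      rw [show (1:ℝ)/c' * c' = 1 by field_simp] at h5
      rwa [Real.rpow_one] at h5
    rw [Real.rpow_neg hlam0.le]
    calc (lam ^ c')⁻¹ ≤ (cc⁻¹)⁻¹ := by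
          apply inv_anti₀ hccinv0 h4
      _ = cc := inv_inv cc
  have hgoal2 : F t' ≤ -lam ^ (c' - 1) := by
    have hle : lam ^ (c' - 1) ≤ cc * κ ^ e := by
      rw [hsplit, hκβ]
      calc lam ^ (-β) * lam ^ (-c') ≤ lam ^ (-β) * cc :=
            mul_le_mul_of_nonneg_left hlamc (Real.rpow_pos_of_pos hlam0 _).le
        _ = cc * lam ^ (-β) := mul_comm _ _
    have := hgoal1
    have hrw : -cc * κ ^ e = -(cc * κ ^ e) := by ring
    rw [hrw] at this
    linarith
  exact ⟨⟨t', ht'mem, hgoal1⟩, ⟨t', ht'mem, hgoal2⟩⟩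
end

section
/- In the setting of the eikonal construction: suppose ∂_t f(0, w₀) = −c < 0 where w₀ = (x₀, ξ₀), and (x₀(t), ξ₀(t)) solves the system ξ₀' = Re w₂ x₀' + ∂_ξ f · Im w₂, x₀' = (Im w₂)^{-1}(∂_x f + ∂_ξ f Re w₂) with Im w₀'' (0) = −∂_t f(0,w₀) − ∂_ξ f(0,w₀)·ξ₀'(0) − ∂_x f(0,w₀)·x₀'(0). Then one can choose the initial complex Hessian w₂(0) (with Im w₂(0) = κ·Id, κ > 0 suitable, and Re w₂(0) suitable) so that Im w₀''(0) ≥ c/2 > 0: if ∂_ξ f(0,w₀) = 0 take κ ≫ 1 so that Im w₀''(0) = c − ∂_x f (κ)^{-1} ∂_x f > c/2; if ∂_ξ f(0,w₀) ≠ 0 choose Re w₂(0) with ∂_x f + ∂_ξ f · Re w₂(0) = 0 and κ ≪ 1 so Im w₀''(0) = c − κ|∂_ξ f|² > c/2. -/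
open Matrix

lemma sum_smul_sq_aux (n : ℕ) (a : ℝ) (v w : Fin n → ℝ) :
    ∑ i, w i * (a • v) i = a * ∑ i, w i * v i := by
  simp only [Pi.smul_apply, smul_eq_mul, Finset.mul_sum]
  exact Finset.sum_congr rfl fun i _ => by ring

/-- Hörmander's argument for a first-order sign change: if
`∂_t f(0, w₀) = -c < 0` and `gx = ∂_x f(0, w₀)`, `gξ = ∂_ξ f(0, w₀)`, then one
can choose `Im w₂(0) = κ·Id` (`κ > 0`) and a symmetric `Re w₂(0) = R` so that,
with `x₀'(0) = X = κ⁻¹ (gx + R gξ)` and `ξ₀'(0) = Ξ = R X + κ gξ`, the quantity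
`Im w₀''(0) = c - ⟨gξ, Ξ⟩ - ⟨gx, X⟩` is at least `c/2 > 0`. -/
theorem stmt_16 (n : ℕ) (c : ℝ) (hc : 0 < c) (gx gξ : Fin n → ℝ) :
    ∃ (κ : ℝ) (R : Matrix (Fin n) (Fin n) ℝ), 0 < κ ∧ R.IsSymm ∧
      ∀ X Ξ : Fin n → ℝ,
        X = κ⁻¹ • (gx + R.mulVec gξ) →
        Ξ = R.mulVec X + κ • gξ →
        c / 2 ≤ c - (∑ i, gξ i * Ξ i) - (∑ i, gx i * X i) := by
  by_cases hg : gξ = 0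
  · -- take R = 0, κ large
    set S : ℝ := ∑ i, gx i ^ 2 with hS
    have hS0 : 0 ≤ S := Finset.sum_nonneg fun i _ => sq_nonneg _
    refine ⟨2 * S / c + 1, 0, by positivity, Matrix.isSymm_zero, ?_⟩
    intro X Ξ hX hΞ
    subst hg
    have hm : (0 : Matrix (Fin n) (Fin n) ℝ).mulVec (0 : Fin n → ℝ) = 0 := by
      simp
    rw [hm, add_zero] at hX
    have hm2 : (0 : Matrix (Fin n) (Fin n) ℝ).mulVec X = 0 := by simp
    rw [hm2] at hΞ
    have hΞ0 : Ξ = 0 := by simp [hΞ]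
    subst hX hΞ0
    have h1 : (∑ i, (0 : Fin n → ℝ) i * (0 : Fin n → ℝ) i) = 0 := by simp
    have h2 : (∑ i, gx i * ((2 * S / c + 1)⁻¹ • gx) i)
        = (2 * S / c + 1)⁻¹ * S := by
      rw [sum_smul_sq_aux, hS]
      congr 1
      exact Finset.sum_congr rfl fun i _ => by ring
    rw [h1, h2]
    have hκ : (0:ℝ) < 2 * S / c + 1 := by positivity
    have hexp : (2 * S / c + 1) * (c / 2) = S + c / 2 := by
      field_simp
    have key : (2 * S / c + 1)⁻¹ * S ≤ c / 2 := by
      rw [inv_mul_le_iff₀ hκ, hexp]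
      linarith
    linarith
  · -- gξ ≠ 0
    set G : ℝ := ∑ j, gξ j ^ 2 with hG
    have hG0 : 0 < G := by
      have : ∃ i, gξ i ≠ 0 := by
        by_contra h
        push_neg at h
        exact hg (funext h)
      obtain ⟨i, hi⟩ := this
      exact Finset.sum_pos' (fun j _ => sq_nonneg _)
        ⟨i, Finset.mem_univ i, by positivity⟩
    set T : ℝ := ∑ j, gx j * gξ j with hT
    set R : Matrix (Fin n) (Fin n) ℝ :=
      Matrix.of fun i j =>
        ((-(gx i * gξ j + gξ i * gx j)) * G + T * gξ i * gξ j) / G ^ 2 with hR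
    have hRsymm : R.IsSymm := by
      ext i j
      simp [hR, Matrix.transpose_apply]
      ring
    have hRg : R.mulVec gξ = -gx := by
      funext i
      simp only [Matrix.mulVec, dotProduct, hR, Matrix.of_apply,
        Pi.neg_apply]
      have key : ∑ j, ((-(gx i * gξ j + gξ i * gx j)) * G + T * gξ i * gξ j) * gξ j
          = (-(gx i * G + gξ i * T)) * G + T * gξ i * G := by
        calc ∑ j, ((-(gx i * gξ j + gξ i * gx j)) * G + T * gξ i * gξ j) * gξ j
            = ∑ j, ((-gx i * G) * (gξ j ^ 2) + (-gξ i * G) * (gx j * gξ j)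
                + (T * gξ i) * (gξ j ^ 2)) := by
              exact Finset.sum_congr rfl fun j _ => by ring
          _ = (-gx i * G) * (∑ j, gξ j ^ 2) + (-gξ i * G) * (∑ j, gx j * gξ j)
                + (T * gξ i) * (∑ j, gξ j ^ 2) := by
              rw [Finset.sum_add_distrib, Finset.sum_add_distrib,
                ← Finset.mul_sum, ← Finset.mul_sum, ← Finset.mul_sum]
          _ = (-(gx i * G + gξ i * T)) * G + T * gξ i * G := by
              rw [← hG, ← hT]; ring
      have heq : ∑ j, ((-(gx i * gξ j + gξ i * gx j)) * G + T * gξ i * gξ j) / G ^ 2 * gξ j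
          = ((-(gx i * G + gξ i * T)) * G + T * gξ i * G) / G ^ 2 := by
        simp only [div_mul_eq_mul_div]
        rw [← Finset.sum_div, key]
      rw [heq]
      field_simp
      ring
    refine ⟨c / (2 * G), R, by positivity, hRsymm, ?_⟩
    intro X Ξ hX hΞ
    have hX0 : X = 0 := by
      rw [hX, hRg]
      simp
    subst hX0
    have hΞv : Ξ = (c / (2 * G)) • gξ := by
      rw [hΞ]
      simp
    subst hΞv
    have h2 : (∑ i, gξ i * ((c / (2 * G)) • gξ) i) = c / (2 * G) * G := by
      rw [sum_smul_sq_aux, hG]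
      congr 1
      exact Finset.sum_congr rfl fun i _ => by ring
    have h1 : (∑ i, gx i * (0 : Fin n → ℝ) i) = 0 := by simp
    rw [h1, h2]
    have : c / (2 * G) * G = c / 2 := by field_simp
    rw [this]
    linarith
end

section
/- With f(t,w) = a(t,w)(t − t₀(w))^k, a smooth non-vanishing, k ≥ 1 odd, t₀ smooth: the w-gradient ∂_w f = ∂_w a · (t − t₀)^k − a k (t − t₀)^{k−1} ∂_w t₀ vanishes to order at least k − 1 in t at the zero set {t = t₀(w)}. Combined with the ODE lemma (w' vanishing to order k−1 implies Δw = w − w₀ vanishing to order k), for w(t) solving w' = A(t) ∂_w f(t, w(t)), w(0) = w₀, t₀(w₀) = 0, one concludes f(t, w(t)) = f(t, w₀) + O(t^{2k−1}), so t ↦ f(t, w(t)) changes sign from + to − to order exactly k at t = 0 when k > 1. -/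
open ContinuousLinearMap

section aux
variable {E F G : Type*} [NormedAddCommGroup E] [NormedSpace ℝ E]
  [NormedAddCommGroup F] [NormedSpace ℝ F] [NormedAddCommGroup G] [NormedSpace ℝ G]

private lemma itzero (m : ℕ) (x : ℝ) : iteratedDeriv m (fun _ : ℝ => (0 : F)) x = 0 := by
  induction m generalizing x with
  | zero => simp
  | succ m ih =>
    rw [iteratedDeriv_succ']
    have : deriv (fun _ : ℝ => (0 : F)) = fun _ : ℝ => (0 : F) := funext fun t => deriv_const t 0
    rw [this]; exact ih x

private lemma itadd {f g : ℝ → F} (hf : ContDiff ℝ (⊤:ℕ∞) f) (hg : ContDiff ℝ (⊤:ℕ∞) g)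
    (m : ℕ) (x : ℝ) :
    iteratedDeriv m (fun t => f t + g t) x = iteratedDeriv m f x + iteratedDeriv m g x := by
  simp only [← iteratedDerivWithin_univ]
  exact iteratedDerivWithin_add (Set.mem_univ x) uniqueDiffOn_univ
    ((hf.of_le (by exact_mod_cast le_top)).contDiffWithinAt)
    ((hg.of_le (by exact_mod_cast le_top)).contDiffWithinAt)

private lemma itsum {ι : Type*} (s : Finset ι) (f : ι → ℝ → F)
    (hf : ∀ i ∈ s, ContDiff ℝ (⊤:ℕ∞) (f i)) (m : ℕ) (x : ℝ) :
    iteratedDeriv m (fun t => ∑ i ∈ s, f i t) x = ∑ i ∈ s, iteratedDeriv m (f i) x := by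
  classical
  induction s using Finset.induction with
  | empty => simpa using itzero m x
  | insert _ _ h ih =>
    rename_i j s
    simp only [Finset.sum_insert h]
    rw [itadd (hf _ (Finset.mem_insert_self _ _))
        (ContDiff.sum fun i hi => hf i (Finset.mem_insert_of_mem hi)),
      ih fun i hi => hf i (Finset.mem_insert_of_mem hi)]

private lemma vb (B : E →L[ℝ] F →L[ℝ] G) : ∀ (j : ℕ) (p : ℝ → E) (q : ℝ → F) (m l : ℕ) (c : ℝ),
    ContDiff ℝ (⊤:ℕ∞) p → ContDiff ℝ (⊤:ℕ∞) q →
    (∀ i, i < m → iteratedDeriv i p c = 0) → (∀ i, i < l → iteratedDeriv i q c = 0) →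
    j < m + l → iteratedDeriv j (fun t => B (p t) (q t)) c = 0 := by
  intro j
  induction j with
  | zero =>
    intro p q m l c hp hq hvp hvq hlt
    rw [iteratedDeriv_zero]
    rcases Nat.eq_zero_or_pos m with hm | hm
    · have : q c = 0 := hvq 0 (by omega)
      simp [this]
    · have : p c = 0 := hvp 0 hm
      simp [this]
  | succ j IH =>
    intro p q m l c hp hq hvp hvq hlt
    have hp' : ContDiff ℝ (⊤:ℕ∞) (deriv p) := (contDiff_infty_iff_deriv.mp hp).2
    have hq' : ContDiff ℝ (⊤:ℕ∞) (deriv q) := (contDiff_infty_iff_deriv.mp hq).2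
    have hd : deriv (fun t => B (p t) (q t))
        = fun t => B (deriv p t) (q t) + B (p t) (deriv q t) := by
      funext t
      have h1 : HasDerivAt (fun t => B (p t)) (B (deriv p t)) t :=
        (B.hasFDerivAt (x := p t)).comp_hasDerivAt t
          ((hp.differentiable (by simp) t).hasDerivAt)
      have h2 : HasDerivAt q (deriv q t) t :=
        (hq.differentiable (by simp) t).hasDerivAt
      exact (h1.clm_apply h2).deriv
    have hs1 : ContDiff ℝ (⊤:ℕ∞) fun t => B (deriv p t) (q t) :=
      ((B.contDiff.comp hp').clm_apply hq)
    have hs2 : ContDiff ℝ (⊤:ℕ∞) fun t => B (p t) (deriv q t) :=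
      ((B.contDiff.comp hp).clm_apply hq')
    rw [iteratedDeriv_succ', hd, itadd hs1 hs2]
    have z1 : iteratedDeriv j (fun t => B (deriv p t) (q t)) c = 0 := by
      refine IH (deriv p) q (m-1) l c hp' hq (fun i hi => ?_) hvq (by omega)
      rw [← iteratedDeriv_succ']
      exact hvp (i+1) (by omega)
    have z2 : iteratedDeriv j (fun t => B (p t) (deriv q t)) c = 0 := by
      refine IH p (deriv q) m (l-1) c hp hq' hvp (fun i hi => ?_) (by omega)
      rw [← iteratedDeriv_succ']
      exact hvq (i+1) (by omega)
    rw [z1, z2, add_zero]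

private lemma vpow {φ : ℝ → ℝ} (hφ : ContDiff ℝ (⊤:ℕ∞) φ) {c : ℝ} (h0 : φ c = 0) :
    ∀ (m i : ℕ), i < m → iteratedDeriv i (fun t => φ t ^ m) c = 0 := by
  intro m
  induction m with
  | zero => intro i hi; omega
  | succ m IH =>
    intro i hi
    have h := vb (ContinuousLinearMap.mul ℝ ℝ) i φ (fun t => φ t ^ m) 1 m c hφ (hφ.pow m)
      (fun i hi => by
        have : i = 0 := by omega
        subst this; simpa using h0)
      (fun i hi => IH i hi) (by omega)
    have e : (fun t => (ContinuousLinearMap.mul ℝ ℝ) (φ t) (φ t ^ m)) = fun t => φ t ^ (m+1) := by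
      funext t; simp [ContinuousLinearMap.mul_apply']; ring
    rwa [e] at h

private lemma keyfact : ∀ (m : ℕ) (ψ : ℝ → ℝ), ContDiff ℝ (⊤:ℕ∞) ψ →
    iteratedDeriv m (fun t => ψ t * t ^ m) 0 = m.factorial * ψ 0 := by
  intro m
  induction m with
  | zero => intro ψ hψ; simp
  | succ m IH =>
    intro ψ hψ
    have hψ' : ContDiff ℝ (⊤:ℕ∞) (deriv ψ) := (contDiff_infty_iff_deriv.mp hψ).2
    have hd : deriv (fun t => ψ t * t ^ (m+1))
        = fun t => ((m+1 : ℝ) * ψ t + t * deriv ψ t) * t ^ m := by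
      funext t
      have h1 : HasDerivAt ψ (deriv ψ t) t :=
        (hψ.differentiable (by simp) t).hasDerivAt
      have h2 : HasDerivAt (fun t : ℝ => t ^ (m+1)) ((m+1 : ℝ) * t ^ m) t := by
        simpa using hasDerivAt_pow (m+1) t
      rw [(h1.fun_mul h2).deriv]; ring
    rw [iteratedDeriv_succ', hd,
      IH (fun t => ((m:ℝ)+1) * ψ t + t * deriv ψ t)
        (((contDiff_const.mul hψ)).add (contDiff_id.mul hψ'))]
    push_cast [Nat.factorial_succ]
    ring

end aux

section aux2
universe u

private lemma compdiff {E : Type u} [NormedAddCommGroup E] [NormedSpace ℝ E] :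
    ∀ (j : ℕ) {G : Type u} [NormedAddCommGroup G] [NormedSpace ℝ G]
      (F : ℝ × E → G) (u v : ℝ → E) (m : ℕ),
      ContDiff ℝ (⊤:ℕ∞) F → ContDiff ℝ (⊤:ℕ∞) u → ContDiff ℝ (⊤:ℕ∞) v → u 0 = v 0 →
      (∀ i, i < m → iteratedDeriv i (fun t => u t - v t) 0 = 0) → j < m →
      iteratedDeriv j (fun t => F (t, u t) - F (t, v t)) 0 = 0 := by
  intro j
  induction j using Nat.strong_induction_on with
  | _ j IH =>
    intro G _ _ F u v m hF hu hv h0 hΔ hjm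
    match j, IH with
    | 0, _ => simp [h0]
    | (j+1), IH =>
      have htop : ((⊤:ℕ∞) : WithTop ℕ∞) + 1 ≤ ((⊤:ℕ∞) : WithTop ℕ∞) := by norm_cast
      have hF' : ContDiff ℝ (⊤:ℕ∞) (fderiv ℝ F) := hF.fderiv_right htop
      have hu' : ContDiff ℝ (⊤:ℕ∞) (deriv u) := (contDiff_infty_iff_deriv.mp hu).2
      have hduv : ContDiff ℝ (⊤:ℕ∞) (deriv fun t => u t - v t) :=
        (contDiff_infty_iff_deriv.mp (hu.sub hv)).2
      have hdiff : ∀ (z : ℝ → E), ContDiff ℝ (⊤:ℕ∞) z → ∀ t : ℝ,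
          HasDerivAt (fun t => F (t, z t)) (fderiv ℝ F (t, z t) (1, deriv z t)) t := by
        intro z hz t
        exact ((hF.differentiable (by simp) (t, z t)).hasFDerivAt).comp_hasDerivAt
          t ((hasDerivAt_id t).prodMk ((hz.differentiable (by simp) t).hasDerivAt))
      have hd : deriv (fun t => F (t, u t) - F (t, v t))
          = fun t => (fderiv ℝ F (t, u t) - fderiv ℝ F (t, v t)) (1, deriv u t)
              + ((fderiv ℝ F (t, v t)).comp (ContinuousLinearMap.inr ℝ ℝ E))
                  ((deriv fun s => u s - v s) t) := by
        funext t
        rw [((hdiff u hu t).fun_sub (hdiff v hv t)).deriv]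
        have e1 : (deriv fun s => u s - v s) t = deriv u t - deriv v t :=
          deriv_sub (hu.differentiable (by simp) t)
            (hv.differentiable (by simp) t)
        rw [e1]
        have e2 : ((0 : ℝ), deriv u t - deriv v t) = (1, deriv u t) - (1, deriv v t) := by
          simp [Prod.mk_sub_mk]
        simp only [ContinuousLinearMap.sub_apply, ContinuousLinearMap.comp_apply,
          ContinuousLinearMap.inr_apply]
        rw [e2, map_sub]
        abel
      have hCu : ContDiff ℝ (⊤:ℕ∞) fun t => fderiv ℝ F (t, u t) :=
        hF'.comp (contDiff_id.prodMk hu)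
      have hCv : ContDiff ℝ (⊤:ℕ∞) fun t => fderiv ℝ F (t, v t) :=
        hF'.comp (contDiff_id.prodMk hv)
      have hs1 : ContDiff ℝ (⊤:ℕ∞)
          fun t => (fderiv ℝ F (t, u t) - fderiv ℝ F (t, v t)) (1, deriv u t) :=
        (hCu.sub hCv).clm_apply (contDiff_const.prodMk hu')
      have hs2 : ContDiff ℝ (⊤:ℕ∞)
          fun t => ((fderiv ℝ F (t, v t)).comp (ContinuousLinearMap.inr ℝ ℝ E))
            ((deriv fun s => u s - v s) t) :=
        (hCv.clm_comp contDiff_const).clm_apply hduv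
      rw [iteratedDeriv_succ', hd, itadd hs1 hs2]
      have z1 : iteratedDeriv j
          (fun t => (fderiv ℝ F (t, u t) - fderiv ℝ F (t, v t)) (1, deriv u t)) 0 = 0 := by
        have h := vb ((ContinuousLinearMap.apply ℝ G :
            (ℝ × E) →L[ℝ] ((ℝ × E) →L[ℝ] G) →L[ℝ] G)) j
          (fun t => ((1 : ℝ), deriv u t))
          (fun t => fderiv ℝ F (t, u t) - fderiv ℝ F (t, v t)) 0 (j+1) 0
          (contDiff_const.prodMk hu') (hCu.sub hCv)
          (fun i hi => by omega)
          (fun i hi => by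
            have := IH i hi (fderiv ℝ F) u v m hF' hu hv h0 hΔ (by omega)
            simpa using this)
          (by omega)
        simpa [ContinuousLinearMap.apply_apply] using h
      have z2 : iteratedDeriv j
          (fun t => ((fderiv ℝ F (t, v t)).comp (ContinuousLinearMap.inr ℝ ℝ E))
            ((deriv fun s => u s - v s) t)) 0 = 0 := by
        have h := vb ((ContinuousLinearMap.apply ℝ G : E →L[ℝ] (E →L[ℝ] G) →L[ℝ] G)) j
          (deriv fun s => u s - v s)
          (fun t => (fderiv ℝ F (t, v t)).comp (ContinuousLinearMap.inr ℝ ℝ E)) (m-1) 0 0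
          hduv (hCv.clm_comp contDiff_const)
          (fun i hi => by
            rw [← iteratedDeriv_succ']
            exact hΔ (i+1) (by omega))
          (fun i hi => by omega)
          (by omega)
        simpa [ContinuousLinearMap.apply_apply] using h
      rw [z1, z2, add_zero]
end aux2

section grad
variable {E : Type*} [NormedAddCommGroup E] [InnerProductSpace ℝ E] [CompleteSpace E]

private lemma grad_formula (a : ℝ → E → ℝ) (θ : E → ℝ) (ha : ContDiff ℝ (⊤ : ℕ∞) (Function.uncurry a))
    (hθ : ContDiff ℝ (⊤ : ℕ∞) θ) (e : ℕ) :
    ∃ H : ℝ × E → E, ContDiff ℝ (⊤ : ℕ∞) H ∧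
      ∀ t v, gradient (fun u => a t u * (t - θ u) ^ (e+1)) v = (t - θ v) ^ e • H (t, v) := by
  have htop : ((⊤:ℕ∞) : WithTop ℕ∞) + 1 ≤ ((⊤:ℕ∞) : WithTop ℕ∞) := by norm_cast
  set Ga : ℝ × E → E := fun p => (InnerProductSpace.toDual ℝ E).symm
      ((fderiv ℝ (Function.uncurry a) p).comp (ContinuousLinearMap.inr ℝ ℝ E)) with hGa
  set Gθ : E → E := fun v => (InnerProductSpace.toDual ℝ E).symm (fderiv ℝ θ v) with hGθ
  refine ⟨fun p => (p.1 - θ p.2) • Ga p - (((e:ℝ)+1) * a p.1 p.2) • Gθ p.2, ?_, ?_⟩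
  · have h1 : ContDiff ℝ (⊤ : ℕ∞) Ga :=
      (InnerProductSpace.toDual ℝ E).symm.contDiff.comp
        ((ha.fderiv_right htop).clm_comp contDiff_const)
    have h2 : ContDiff ℝ (⊤ : ℕ∞) Gθ :=
      (InnerProductSpace.toDual ℝ E).symm.contDiff.comp (hθ.fderiv_right htop)
    refine ContDiff.sub ?_ ?_
    · exact ((contDiff_fst.sub (hθ.comp contDiff_snd))).smul h1
    · exact (contDiff_const.mul ha).smul (h2.comp contDiff_snd)
  · intro t v
    have hθd : HasFDerivAt θ (fderiv ℝ θ v) v :=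
      (hθ.differentiable (by simp) v).hasFDerivAt
    have ha_at : HasFDerivAt (fun u => a t u)
        ((fderiv ℝ (Function.uncurry a) (t,v)).comp (ContinuousLinearMap.inr ℝ ℝ E)) v := by
      have h1 : HasFDerivAt (Function.uncurry a) (fderiv ℝ (Function.uncurry a) (t,v)) (t,v) :=
        (ha.differentiable (by simp) _).hasFDerivAt
      exact h1.comp v (hasFDerivAt_prodMk_right t v)
    have h3 : HasDerivAt (fun s : ℝ => t - s) (-1) (θ v) := by
      simpa using (hasDerivAt_id (θ v)).const_sub t
    have h4 := hasDerivAt_pow (e+1) (t - θ v)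
    have h5 : HasDerivAt (fun s : ℝ => (t - s) ^ (e+1))
        ((((e:ℝ)+1) * (t - θ v) ^ e) * (-1)) (θ v) := by
      have := h4.comp (θ v) h3
      simpa [Function.comp_def] using this
    have hg_at : HasFDerivAt (fun u => (t - θ u)^(e+1))
        (((((e:ℝ)+1) * (t - θ v) ^ e) * (-1)) • fderiv ℝ θ v) v :=
      h5.comp_hasFDerivAt v hθd
    have hmul := ha_at.fun_mul hg_at
    have hgrad := hmul.hasGradientAt.gradient
    rw [hgrad]
    simp only [map_add, map_smul]
    have e3 : ((InnerProductSpace.toDual ℝ E).symm)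
        ((fderiv ℝ (Function.uncurry a) (t, v)).comp (ContinuousLinearMap.inr ℝ ℝ E))
        = Ga (t,v) := rfl
    have e4 : ((InnerProductSpace.toDual ℝ E).symm) (fderiv ℝ θ v) = Gθ v := rfl
    rw [e3, e4, pow_succ]
    module
end grad


/-- propagation of the finite-order sign change: with
`f(t,w) = a(t,w)(t - θ(w))^k`, `a < 0` smooth, `k > 1` odd, `θ` smooth, the
`w`-gradient `∂_w f` vanishes to order `≥ k - 1` in `t` at `t = θ(w)`, and for
`w(t)` solving `w' = A(t) ∂_w f(t, w(t))`, `w 0 = w₀`, `θ(w₀) = 0`, one has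
`f(t, w(t)) = f(t, w₀) + O(t^{2k-1})`; in particular `t ↦ f(t, w(t))` changes
sign from `+` to `-` to exact order `k` at `t = 0`. -/
theorem stmt_18 {n : ℕ}
    (f a : ℝ → EuclideanSpace ℝ (Fin (2 * n)) → ℝ)
    (θ : EuclideanSpace ℝ (Fin (2 * n)) → ℝ)
    (hf : ContDiff ℝ (⊤ : ℕ∞) (Function.uncurry f))
    (ha : ContDiff ℝ (⊤ : ℕ∞) (Function.uncurry a))
    (hθ : ContDiff ℝ (⊤ : ℕ∞) θ)
    (haneg : ∀ t w, a t w < 0)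
    (k : ℕ) (hk : Odd k) (hk1 : 1 < k)
    (hfac : ∀ t w, f t w = a t w * (t - θ w) ^ k)
    (A : ℝ → EuclideanSpace ℝ (Fin (2 * n)) →L[ℝ] EuclideanSpace ℝ (Fin (2 * n)))
    (hA : ContDiff ℝ (⊤ : ℕ∞) A)
    (w : ℝ → EuclideanSpace ℝ (Fin (2 * n))) (w₀ : EuclideanSpace ℝ (Fin (2 * n)))
    (hw : ContDiff ℝ (⊤ : ℕ∞) w) (hw0 : w 0 = w₀) (hθ0 : θ w₀ = 0)
    (hode : ∀ t, deriv w t = A t (gradient (fun v => f t v) (w t))) :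
    -- the `w`-gradient vanishes to order at least `k - 1` in `t` at `t = θ(v)`:
    (∀ v : EuclideanSpace ℝ (Fin (2 * n)), ∀ j < k - 1,
        iteratedDeriv j (fun t => gradient (fun u => f t u) v) (θ v) = 0) ∧
    -- `f(t, w(t)) - f(t, w₀)` vanishes to order `2k - 1` at `t = 0`:
    (∀ j < 2 * k - 1, iteratedDeriv j (fun t => f t (w t) - f t w₀) 0 = 0) ∧
    -- `t ↦ f(t, w(t))` changes sign from `+` to `-` to exact order `k` at `0`:
    (∀ j < k, iteratedDeriv j (fun t => f t (w t)) 0 = 0) ∧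
    iteratedDeriv k (fun t => f t (w t)) 0 < 0 := by
  obtain ⟨e, rfl⟩ : ∃ e, k = e + 1 := ⟨k - 1, by omega⟩
  have he1 : 1 ≤ e := by omega
  obtain ⟨H, hH, hHf⟩ := grad_formula a θ ha hθ e
  -- downgraded smoothness
  have hf' : ContDiff ℝ (⊤:ℕ∞) (Function.uncurry f) := hf.of_le (by simp)
  have ha' : ContDiff ℝ (⊤:ℕ∞) (Function.uncurry a) := ha.of_le (by simp)
  have hθ' : ContDiff ℝ (⊤:ℕ∞) θ := hθ.of_le (by simp)
  have hA' : ContDiff ℝ (⊤:ℕ∞) A := hA.of_le (by simp)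
  have hw' : ContDiff ℝ (⊤:ℕ∞) w := hw.of_le (by simp)
  have hH' : ContDiff ℝ (⊤:ℕ∞) H := hH.of_le (by simp)
  -- gradient identity for f
  have hgrad : ∀ t (v : EuclideanSpace ℝ (Fin (2 * n))), gradient (fun u => f t u) v = (t - θ v) ^ e • H (t, v) := by
    intro t v
    rw [show (fun u => f t u) = fun u => a t u * (t - θ u) ^ (e+1) from
      funext fun u => hfac t u]
    exact hHf t v
  have part1 : ∀ v : EuclideanSpace ℝ (Fin (2 * n)), ∀ j < e + 1 - 1,
      iteratedDeriv j (fun t => gradient (fun u => f t u) v) (θ v) = 0 := by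
    intro v j hj
    have hfun : (fun t => gradient (fun u => f t u) v) = fun t => (t - θ v) ^ e • H (t, v) :=
      funext fun t => hgrad t v
    rw [hfun]
    have h := vb ((ContinuousLinearMap.lsmul ℝ ℝ : ℝ →L[ℝ] EuclideanSpace ℝ (Fin (2 * n)) →L[ℝ] EuclideanSpace ℝ (Fin (2 * n)))) j
      (fun t => (t - θ v) ^ e) (fun t => H (t, v)) e 0 (θ v)
      ((contDiff_id.sub contDiff_const).pow e)
      (hH'.comp (contDiff_id.prodMk contDiff_const))
      (vpow (contDiff_id.sub contDiff_const) (by simp) e)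
      (fun i hi => by omega) (by omega)
    simpa only [ContinuousLinearMap.lsmul_apply] using h
  -- the w-curve quantities
  have hφ : ContDiff ℝ (⊤:ℕ∞) (fun t => t - θ (w t)) :=
    contDiff_id.sub (hθ'.comp hw')
  have hφ0 : (fun t => t - θ (w t)) 0 = 0 := by simp [hw0, hθ0]
  have hdw_eq : deriv w = fun t => (t - θ (w t)) ^ e • (A t (H (t, w t))) := by
    funext t
    rw [hode t, show (fun v => f t v) = fun u => f t u from rfl, hgrad t (w t), map_smul]
  have hqs : ContDiff ℝ (⊤:ℕ∞) (fun t => A t (H (t, w t))) :=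
    hA'.clm_apply (hH'.comp (contDiff_id.prodMk hw'))
  have Vdw : ∀ i < e, iteratedDeriv i (deriv w) 0 = 0 := by
    intro i hi
    rw [hdw_eq]
    have h := vb ((ContinuousLinearMap.lsmul ℝ ℝ : ℝ →L[ℝ] EuclideanSpace ℝ (Fin (2 * n)) →L[ℝ] EuclideanSpace ℝ (Fin (2 * n)))) i
      (fun t => (t - θ (w t)) ^ e) (fun t => A t (H (t, w t))) e 0 0
      (hφ.pow e) hqs (vpow hφ hφ0 e) (fun i hi => by omega) (by omega)
    simpa only [ContinuousLinearMap.lsmul_apply] using h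
  have VΔ : ∀ i < e + 1, iteratedDeriv i (fun t => w t - w₀) 0 = 0 := by
    intro i hi
    match i with
    | 0 => simp [hw0]
    | (i+1) =>
      rw [iteratedDeriv_succ']
      have : deriv (fun t => w t - w₀) = deriv w := funext fun t => deriv_sub_const w₀
      rw [this]
      exact Vdw i (by omega)
  have Vα : ∀ i < e + 1, iteratedDeriv i (fun t => θ (w t)) 0 = 0 := by
    intro i hi
    have h := compdiff i (fun p : ℝ × EuclideanSpace ℝ (Fin (2 * n)) => θ p.2) w (fun _ => w₀) (e+1)
      (hθ'.comp contDiff_snd) hw' contDiff_const hw0 VΔ hi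
    have : (fun t => θ (w t) - θ w₀) = fun t => θ (w t) := by
      funext t; rw [hθ0, sub_zero]
    rwa [show (fun t => (fun p : ℝ × EuclideanSpace ℝ (Fin (2 * n)) => θ p.2) (t, w t)
        - (fun p : ℝ × EuclideanSpace ℝ (Fin (2 * n)) => θ p.2) (t, (fun _ : ℝ => w₀) t))
        = fun t => θ (w t) from this] at h
  have Vβ : ∀ i < e + 1, iteratedDeriv i (fun t => a t (w t) - a t w₀) 0 = 0 := by
    intro i hi
    exact compdiff i (Function.uncurry a) w (fun _ => w₀) (e+1) ha' hw' contDiff_const hw0 VΔ hi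
  -- the geometric-sum factor
  have hSsm : ∀ i ∈ Finset.range (e+1),
      ContDiff ℝ (⊤:ℕ∞) (fun t => (t - θ (w t)) ^ i * t ^ (e - i)) :=
    fun i _ => (hφ.pow i).mul (contDiff_id.pow (e - i))
  have hS : ContDiff ℝ (⊤:ℕ∞)
      (fun t => ∑ i ∈ Finset.range (e+1), (t - θ (w t)) ^ i * t ^ (e - i)) :=
    ContDiff.sum hSsm
  have VS : ∀ i < e, iteratedDeriv i
      (fun t => ∑ j ∈ Finset.range (e+1), (t - θ (w t)) ^ j * t ^ (e - j)) 0 = 0 := by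
    intro i hi
    rw [itsum (Finset.range (e+1)) (fun j t => (t - θ (w t)) ^ j * t ^ (e - j)) hSsm i 0]
    refine Finset.sum_eq_zero fun j hj => ?_
    have hj' : j ≤ e := by simpa [Nat.lt_succ_iff] using hj
    have h := vb (ContinuousLinearMap.mul ℝ ℝ) i
      (fun t => (t - θ (w t)) ^ j) (fun t : ℝ => t ^ (e - j)) j (e - j) 0
      (hφ.pow j) (contDiff_id.pow (e - j))
      (vpow hφ hφ0 j) (vpow contDiff_id (by simp) (e - j)) (by omega)
    simpa only [ContinuousLinearMap.mul_apply'] using h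
  -- decomposition of f(t, w t) - f(t, w₀)
  have hgdecomp : (fun t => f t (w t) - f t w₀)
      = fun t => (a t (w t) - a t w₀) * (t - θ (w t)) ^ (e+1)
          + (a t w₀ * ∑ j ∈ Finset.range (e+1), (t - θ (w t)) ^ j * t ^ (e - j))
              * ((t - θ (w t)) - t) := by
    funext t
    have hgs := geom_sum₂_mul (t - θ (w t)) t (e+1)
    rw [hfac t (w t), hfac t w₀, hθ0, sub_zero]
    have hexp : (e + 1) - 1 = e := by omega
    rw [hexp] at hgs
    linear_combination (-(a t w₀)) * hgs
  have hβsm : ContDiff ℝ (⊤:ℕ∞) (fun t => a t (w t) - a t w₀) :=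
    (ha'.comp (contDiff_id.prodMk hw')).sub (ha'.comp (contDiff_id.prodMk contDiff_const))
  have haw₀ : ContDiff ℝ (⊤:ℕ∞) (fun t => a t w₀) :=
    ha'.comp (contDiff_id.prodMk contDiff_const)
  have part2 : ∀ j < 2 * (e + 1) - 1,
      iteratedDeriv j (fun t => f t (w t) - f t w₀) 0 = 0 := by
    intro j hj
    rw [hgdecomp, itadd
      (f := fun t => (a t (w t) - a t w₀) * (t - θ (w t)) ^ (e+1))
      (g := fun t => (a t w₀ * ∑ j ∈ Finset.range (e+1), (t - θ (w t)) ^ j * t ^ (e - j))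
          * ((t - θ (w t)) - t))
      (hβsm.mul (hφ.pow (e+1))) ((haw₀.mul hS).mul (hφ.sub contDiff_id))]
    have z1 : iteratedDeriv j
        (fun t => (a t (w t) - a t w₀) * (t - θ (w t)) ^ (e+1)) 0 = 0 := by
      have h := vb (ContinuousLinearMap.mul ℝ ℝ) j
        (fun t => a t (w t) - a t w₀) (fun t => (t - θ (w t)) ^ (e+1)) (e+1) (e+1) 0
        hβsm (hφ.pow (e+1)) Vβ (vpow hφ hφ0 (e+1)) (by omega)
      simpa only [ContinuousLinearMap.mul_apply'] using h
    have Vp : ∀ i < e, iteratedDeriv i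
        (fun t => a t w₀ * ∑ j ∈ Finset.range (e+1), (t - θ (w t)) ^ j * t ^ (e - j)) 0 = 0 := by
      intro i hi
      have h := vb (ContinuousLinearMap.mul ℝ ℝ) i
        (fun t => a t w₀)
        (fun t => ∑ j ∈ Finset.range (e+1), (t - θ (w t)) ^ j * t ^ (e - j)) 0 e 0
        haw₀ hS (fun i hi => by omega) VS (by omega)
      simpa only [ContinuousLinearMap.mul_apply'] using h
    have Vq : ∀ i < e + 1, iteratedDeriv i (fun t => (t - θ (w t)) - t) 0 = 0 := by
      intro i hi
      have hneg : (fun t => (t - θ (w t)) - t) = fun t => -(θ (w t)) := by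
        funext t; ring
      rw [hneg]
      rw [iteratedDeriv_fun_neg]
      simp [Vα i hi]
    have z2 : iteratedDeriv j
        (fun t => (a t w₀ * ∑ j ∈ Finset.range (e+1), (t - θ (w t)) ^ j * t ^ (e - j))
          * ((t - θ (w t)) - t)) 0 = 0 := by
      have h := vb (ContinuousLinearMap.mul ℝ ℝ) j
        (fun t => a t w₀ * ∑ j ∈ Finset.range (e+1), (t - θ (w t)) ^ j * t ^ (e - j))
        (fun t => (t - θ (w t)) - t) e (e+1) 0
        (haw₀.mul hS) (hφ.sub contDiff_id) Vp Vq (by omega)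
      simpa only [ContinuousLinearMap.mul_apply'] using h
    rw [z1, z2, add_zero]
  -- splitting f(t, w t)
  have hsplit : (fun t => f t (w t))
      = fun t => (f t (w t) - f t w₀) + a t w₀ * t ^ (e+1) := by
    funext t
    rw [hfac t w₀, hθ0, sub_zero]
    ring
  have hgsm : ContDiff ℝ (⊤:ℕ∞) (fun t => f t (w t) - f t w₀) :=
    (hf'.comp (contDiff_id.prodMk hw')).sub (hf'.comp (contDiff_id.prodMk contDiff_const))
  have hmono : ContDiff ℝ (⊤:ℕ∞) (fun t => a t w₀ * t ^ (e+1)) :=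
    haw₀.mul (contDiff_id.pow (e+1))
  have part3 : ∀ j < e + 1, iteratedDeriv j (fun t => f t (w t)) 0 = 0 := by
    intro j hj
    rw [hsplit, itadd (f := fun t => f t (w t) - f t w₀) (g := fun t => a t w₀ * t ^ (e+1))
      hgsm hmono, part2 j (by omega), zero_add]
    have h := vb (ContinuousLinearMap.mul ℝ ℝ) j
      (fun t => a t w₀) (fun t : ℝ => t ^ (e+1)) 0 (e+1) 0
      haw₀ (contDiff_id.pow (e+1)) (fun i hi => by omega)
      (vpow contDiff_id (by simp) (e+1)) (by omega)
    simpa only [ContinuousLinearMap.mul_apply'] using h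
  have part4 : iteratedDeriv (e+1) (fun t => f t (w t)) 0 < 0 := by
    rw [hsplit, itadd (f := fun t => f t (w t) - f t w₀) (g := fun t => a t w₀ * t ^ (e+1))
      hgsm hmono, part2 (e+1) (by omega), zero_add,
      keyfact (e+1) (fun t => a t w₀) haw₀]
    have h1 : (0:ℝ) < (e+1).factorial := by positivity
    exact mul_neg_of_pos_of_neg h1 (haneg 0 w₀)
  exact ⟨part1, part2, part3, part4⟩
end
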